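/- arXiv:2206.06924 — 5 statements merged into one kernel-verified Lean document; each statement's English description precedes it below -/
import Mathlib

section
/- For a path graph (linear tree) L_n on n vertices, there exists a planar linear arrangement whose cost equals C(n,2); consequently the maximum planar arrangement cost of L_n is C(n,2). -/
open SimpleGraph

attribute [local instance] Classical.propDecidable

/-- Length of an edge (as an unordered pair) in an arrangement. -/
noncomputable def edgeLen {V : Type*} [Fintype V] (π : V ≃ Fin (Fintype.card V)) :
    Sym2 V → ℕ :=
  Sym2.lift ⟨fun u v => ((π u : ℤ) - (π v : ℤ)).natAbs, fun u v => by
    simp only []; omega⟩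

/-- Cost of a linear arrangement: sum of edge lengths. -/
noncomputable def cost {V : Type*} [Fintype V] (G : SimpleGraph V)
    (π : V ≃ Fin (Fintype.card V)) : ℕ :=
  ∑ᶠ e ∈ G.edgeSet, edgeLen π e

/-- An arrangement is planar if no two edges cross. -/
def Planar {V : Type*} [Fintype V] (G : SimpleGraph V)
    (π : V ≃ Fin (Fintype.card V)) : Prop :=
  ∀ ⦃s t u v : V⦄, G.Adj s t → G.Adj u v → π s < π t → π u < π v → π s < π u →
    ¬(π u < π t ∧ π t < π v)

/-- An arrangement of a tree rooted at `r` is projective if it is planar and no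
edge covers the root. -/
def Projective {V : Type*} [Fintype V] (G : SimpleGraph V) (r : V)
    (π : V ≃ Fin (Fintype.card V)) : Prop :=
  Planar G π ∧ ∀ ⦃u v : V⦄, G.Adj u v → ¬(π u < π r ∧ π r < π v)

noncomputable def maxCost {V : Type*} [Fintype V] (G : SimpleGraph V) : ℕ :=
  sSup {c | ∃ π : V ≃ Fin (Fintype.card V), cost G π = c}

noncomputable def maxPlanar {V : Type*} [Fintype V] (G : SimpleGraph V) : ℕ :=
  sSup {c | ∃ π : V ≃ Fin (Fintype.card V), Planar G π ∧ cost G π = c}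

noncomputable def maxProj {V : Type*} [Fintype V] (G : SimpleGraph V) (r : V) : ℕ :=
  sSup {c | ∃ π : V ≃ Fin (Fintype.card V), Projective G r π ∧ cost G π = c}

/-- `compSize G u v` : the number of vertices of the connected component of `v`
after removing the edge `uv` (this is `n_u(v)`). -/
noncomputable def compSize {V : Type*} [Fintype V] (G : SimpleGraph V) (u v : V) : ℕ :=
  Nat.card {y : V // (G.deleteEdges {s(u, v)}).Reachable v y}

/-- The star graph: the vertex with value `0` (the hub) is adjacent to all others. -/
def starGraph (n : ℕ) : SimpleGraph (Fin n) :=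
  SimpleGraph.fromRel (fun i _ => (i : ℕ) = 0)

/-!
The zigzag arrangement puts `v₁, v₃, v₅, …` at positions `1, 2, 3, …` and `v₂, v₄, …` at
positions `n, n - 1, …`. Its edges are nested intervals, so it is planar, and their lengths are
`n - 1, n - 2, …, 1`.

For the upper bound, delete `v₁` from a planar arrangement and close the gap at its position `c`:
an edge of the remaining path gets shorter by one exactly when it passes over `c`. These edges
are pairwise nested and each one strictly contains the edge `v₁v₂`, so their lengths are distinct
and lie between `|v₁v₂| + 1` and `n - 1`. The total loss is therefore at most `n - 1`, and
induction gives `C(n - 1, 2) + (n - 1) = C(n, 2)`.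
-/

open Finset Fin.NatCast
open Set (EqOn InjOn MapsTo)

namespace LinearArrangement

section Intervals

variable {α : Type*} [LinearOrder α]

def IntervalsCross (a b c d : α) : Prop :=
  (min a b < min c d ∧ min c d < max a b ∧ max a b < max c d) ∨
    (min c d < min a b ∧ min a b < max c d ∧ max c d < max a b)

def Covers (a b c : α) : Prop := min a b < c ∧ c < max a b

theorem IntervalsCross.of_monotone {β : Type*} [LinearOrder β] {f : α → β} (hf : Monotone f)
    {a b c d : α} (h : IntervalsCross (f a) (f b) (f c) (f d)) : IntervalsCross a b c d := by
  simp only [IntervalsCross, ← hf.map_min, ← hf.map_max] at h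
  exact h.imp (fun ⟨h₁, h₂, h₃⟩ => ⟨hf.reflect_lt h₁, hf.reflect_lt h₂, hf.reflect_lt h₃⟩)
    (fun ⟨h₁, h₂, h₃⟩ => ⟨hf.reflect_lt h₁, hf.reflect_lt h₂, hf.reflect_lt h₃⟩)

end Intervals

section NatIntervals

variable {a b c d a' b' : ℕ}

theorem dist_lt_of_covers (h : Covers a b c) (hcross : ¬IntervalsCross a b c d) :
    Nat.dist c d < Nat.dist a b := by
  unfold Covers IntervalsCross Nat.dist at *
  omega

theorem min_eq_and_max_eq_of_covers (h : Covers a b c) (h' : Covers a' b' c)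
    (hcross : ¬IntervalsCross a b a' b') (hdist : Nat.dist a b = Nat.dist a' b') :
    min a b = min a' b' ∧ max a b = max a' b' := by
  unfold Covers IntervalsCross Nat.dist at *
  omega

def closeGap (c x : ℕ) : ℕ := if x < c then x else x - 1

theorem closeGap_monotone (c : ℕ) : Monotone (closeGap c) := by
  intro x y hxy
  unfold closeGap
  split_ifs <;> omega

theorem closeGap_injOn (c : ℕ) : InjOn (closeGap c) {c}ᶜ := by
  intro x hx y hy h
  simp only [Set.mem_compl_iff, Set.mem_singleton_iff] at hx hy
  unfold closeGap at h
  split_ifs at h <;> omega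

theorem dist_closeGap_add_ite (ha : a ≠ c) (hb : b ≠ c) :
    Nat.dist (closeGap c a) (closeGap c b) + (if Covers a b c then 1 else 0) = Nat.dist a b := by
  by_cases h : Covers a b c <;> simp only [h, if_true, if_false] <;>
    unfold closeGap Covers Nat.dist at * <;> split_ifs <;> omega

end NatIntervals

section Walk

variable {n : ℕ} {p q : ℕ → ℕ}

-- `p k` is the position of the `k`-th vertex of a walk `p 0, …, p n`; later values are ignored.
def walkLength (p : ℕ → ℕ) (n : ℕ) : ℕ := ∑ k ∈ range n, Nat.dist (p k) (p (k + 1))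

def NonCrossing (p : ℕ → ℕ) (n : ℕ) : Prop :=
  ∀ i < n, ∀ j < n, ¬IntervalsCross (p i) (p (i + 1)) (p j) (p (j + 1))

theorem walkLength_congr (h : EqOn p q (Set.Iic n)) : walkLength p n = walkLength q n :=
  sum_congr rfl fun k hk => by
    have hk : k < n := mem_range.1 hk
    rw [h (Set.mem_Iic.2 hk.le), h (Set.mem_Iic.2 hk)]

theorem NonCrossing.congr (hp : NonCrossing p n) (h : EqOn p q (Set.Iic n)) : NonCrossing q n := by
  intro i hi j hj
  rw [← h (Set.mem_Iic.2 hi.le), ← h (Set.mem_Iic.2 hi), ← h (Set.mem_Iic.2 hj.le),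
    ← h (Set.mem_Iic.2 hj)]
  exact hp i hi j hj

def dropHead (p : ℕ → ℕ) (k : ℕ) : ℕ := closeGap (p 0) (p (k + 1))

theorem NonCrossing.dropHead (hp : NonCrossing p (n + 1)) : NonCrossing (dropHead p) n :=
  fun i hi j hj h => hp (i + 1) (by omega) (j + 1) (by omega) (h.of_monotone (closeGap_monotone _))

theorem apply_succ_ne_apply_zero (hinj : InjOn p (Set.Iic (n + 1))) {k : ℕ} (hk : k ≤ n) :
    p (k + 1) ≠ p 0 := fun h => by
  have := hinj (Set.mem_Iic.2 (by omega)) (Set.mem_Iic.2 (Nat.zero_le _)) h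
  omega

theorem mapsTo_dropHead (hmaps : MapsTo p (Set.Iic (n + 1)) (Set.Iic (n + 1)))
    (hinj : InjOn p (Set.Iic (n + 1))) : MapsTo (dropHead p) (Set.Iic n) (Set.Iic n) := by
  intro k hk
  have hk : k ≤ n := hk
  have h₀ : p 0 ≤ n + 1 := hmaps (Set.mem_Iic.2 (Nat.zero_le _))
  have h₁ : p (k + 1) ≤ n + 1 := hmaps (Set.mem_Iic.2 (by omega))
  have hne := apply_succ_ne_apply_zero hinj hk
  simp only [dropHead, closeGap, Set.mem_Iic]
  split_ifs <;> omega

theorem injOn_dropHead (hinj : InjOn p (Set.Iic (n + 1))) : InjOn (dropHead p) (Set.Iic n) := by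
  intro i hi j hj h
  have hi : i ≤ n := hi
  have hj : j ≤ n := hj
  have := hinj (Set.mem_Iic.2 (by omega)) (Set.mem_Iic.2 (by omega)) <| closeGap_injOn (p 0)
    (apply_succ_ne_apply_zero hinj hi) (apply_succ_ne_apply_zero hinj hj) h
  omega

theorem walkLength_succ_eq (hinj : InjOn p (Set.Iic (n + 1))) :
    walkLength p (n + 1) = Nat.dist (p 0) (p 1) + walkLength (dropHead p) n +
      #{k ∈ range n | Covers (p (k + 1)) (p (k + 2)) (p 0)} := by
  have htail : ∑ k ∈ range n, Nat.dist (p (k + 1)) (p (k + 2)) =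
      walkLength (dropHead p) n + #{k ∈ range n | Covers (p (k + 1)) (p (k + 2)) (p 0)} := by
    rw [walkLength, card_filter, ← sum_add_distrib]
    refine sum_congr rfl fun k hk => (dist_closeGap_add_ite ?_ ?_).symm
    · exact apply_succ_ne_apply_zero hinj (mem_range.1 hk).le
    · exact apply_succ_ne_apply_zero hinj (mem_range.1 hk)
  rw [walkLength, sum_range_succ', htail]
  ring

theorem card_covers_add_dist_le (hmaps : MapsTo p (Set.Iic (n + 1)) (Set.Iic (n + 1)))
    (hinj : InjOn p (Set.Iic (n + 1))) (hnc : NonCrossing p (n + 1)) :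
    #{k ∈ range n | Covers (p (k + 1)) (p (k + 2)) (p 0)} + Nat.dist (p 0) (p 1) ≤ n + 1 := by
  have hle : ∀ k ≤ n + 1, p k ≤ n + 1 := fun k hk => hmaps (Set.mem_Iic.2 hk)
  have hinj' : ∀ i ≤ n + 1, ∀ j ≤ n + 1, p i = p j → i = j :=
    fun i hi j hj => hinj (Set.mem_Iic.2 hi) (Set.mem_Iic.2 hj)
  have key : #{k ∈ range n | Covers (p (k + 1)) (p (k + 2)) (p 0)} ≤
      #(Icc (Nat.dist (p 0) (p 1) + 1) (n + 1)) := by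
    refine card_le_card_of_injOn (fun k => Nat.dist (p (k + 1)) (p (k + 2))) ?_ ?_
    · intro k hk
      simp only [coe_filter, mem_range, Set.mem_ofPred_eq] at hk
      have hlt : Nat.dist (p 0) (p 1) < _ :=
        dist_lt_of_covers hk.2 (hnc (k + 1) (by omega) 0 (by omega))
      have := hle (k + 1) (by omega)
      have := hle (k + 2) (by omega)
      simp only [coe_Icc, Set.mem_Icc]
      unfold Nat.dist at *
      omega
    · intro k hk k' hk' h
      simp only [coe_filter, mem_range, Set.mem_ofPred_eq] at hk hk'
      obtain ⟨hmin, hmax⟩ := min_eq_and_max_eq_of_covers hk.2 hk'.2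
        (hnc (k + 1) (by omega) (k' + 1) (by omega)) h
      have := hinj' (k + 1) (by omega) (k' + 1) (by omega)
      have := hinj' (k + 1) (by omega) (k' + 2) (by omega)
      have := hinj' (k + 2) (by omega) (k' + 1) (by omega)
      omega
  have := hle 0 (by omega)
  have := hle 1 (by omega)
  rw [Nat.card_Icc] at key
  unfold Nat.dist at *
  omega

theorem walkLength_le_choose (hmaps : MapsTo p (Set.Iic n) (Set.Iic n)) (hinj : InjOn p (Set.Iic n))
    (hnc : NonCrossing p n) : walkLength p n ≤ (n + 1).choose 2 := by
  induction n generalizing p with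
  | zero => simp [walkLength]
  | succ n ih =>
    have hrest := ih (mapsTo_dropHead hmaps hinj) (injOn_dropHead hinj) hnc.dropHead
    have hhead := card_covers_add_dist_le hmaps hinj hnc
    have hchoose : (n + 2).choose 2 = (n + 1).choose 2 + (n + 1) := by
      simp [Nat.choose_succ_succ', add_comm]
    rw [walkLength_succ_eq hinj, hchoose]
    omega

end Walk

section Zigzag

variable {n k : ℕ}

def zigzag (n k : ℕ) : ℕ := if k % 2 = 0 then k / 2 else n - k / 2

theorem zigzag_mapsTo (n : ℕ) : MapsTo (zigzag n) (Set.Iic n) (Set.Iic n) := by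
  intro k hk
  simp only [Set.mem_Iic, zigzag] at hk ⊢
  split_ifs <;> omega

theorem zigzag_injOn (n : ℕ) : InjOn (zigzag n) (Set.Iic n) := by
  intro i hi j hj h
  simp only [Set.mem_Iic, zigzag] at hi hj h
  split_ifs at h <;> omega

theorem min_zigzag (hk : k < n) : min (zigzag n k) (zigzag n (k + 1)) = (k + 1) / 2 := by
  unfold zigzag
  split_ifs <;> omega

theorem max_zigzag (hk : k < n) : max (zigzag n k) (zigzag n (k + 1)) = n - k / 2 := by
  unfold zigzag
  split_ifs <;> omega

theorem nonCrossing_zigzag (n : ℕ) : NonCrossing (zigzag n) n := by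
  intro i hi j hj
  rw [IntervalsCross, min_zigzag hi, max_zigzag hi, min_zigzag hj, max_zigzag hj]
  omega

theorem walkLength_zigzag (n : ℕ) : walkLength (zigzag n) n = (n + 1).choose 2 := by
  have hdist : ∀ k ∈ range n, Nat.dist (zigzag n k) (zigzag n (k + 1)) = n - k := by
    intro k hk
    have hk := mem_range.1 hk
    have := min_zigzag hk
    have := max_zigzag hk
    unfold Nat.dist
    omega
  calc walkLength (zigzag n) n = ∑ k ∈ range n, (n - k) := sum_congr rfl hdist
    _ = ∑ k ∈ range n, (k + 1) := by
      refine (sum_congr rfl fun k hk => ?_).trans (sum_range_reflect (fun k => k + 1) n)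
      have := mem_range.1 hk
      change n - k = n - 1 - k + 1
      omega
    _ = ∑ k ∈ range (n + 1), k := by rw [sum_range_succ']; rfl
    _ = (n + 1).choose 2 := by rw [sum_range_id, Nat.choose_two_right]

end Zigzag

section PathArrangement

variable {n : ℕ}

theorem not_intervalsCross_of_planar {V : Type*} [Fintype V] {G : SimpleGraph V}
    {π : V ≃ Fin (Fintype.card V)} (h : Planar G π) {s t u v : V} (hst : G.Adj s t)
    (huv : G.Adj u v) : ¬IntervalsCross (π s : ℕ) (π t) (π u) (π v) := by
  have orient : ∀ {x y : V}, G.Adj x y → ∃ a b, G.Adj a b ∧ π a < π b ∧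
      min (π x : ℕ) (π y) = π a ∧ max (π x : ℕ) (π y) = π b := by
    intro x y hxy
    rcases lt_or_gt_of_ne (π.injective.ne hxy.ne) with hlt | hlt
    · exact ⟨x, y, hxy, hlt, min_eq_left (Fin.lt_def.1 hlt).le, max_eq_right (Fin.lt_def.1 hlt).le⟩
    · exact ⟨y, x, hxy.symm, hlt, min_eq_right (Fin.lt_def.1 hlt).le,
        max_eq_left (Fin.lt_def.1 hlt).le⟩
  obtain ⟨a, b, hab, hab', hmin₁, hmax₁⟩ := orient hst
  obtain ⟨c, d, hcd, hcd', hmin₂, hmax₂⟩ := orient huv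
  rw [IntervalsCross, hmin₁, hmax₁, hmin₂, hmax₂]
  rintro (⟨h₁, h₂, h₃⟩ | ⟨h₁, h₂, h₃⟩)
  · exact h hab hcd hab' hcd' h₁ ⟨h₂, h₃⟩
  · exact h hcd hab hcd' hab' h₁ ⟨h₂, h₃⟩

def positions (π : Fin (n + 1) ≃ Fin (Fintype.card (Fin (n + 1)))) (k : ℕ) : ℕ := π k

theorem positions_mapsTo (π : Fin (n + 1) ≃ Fin (Fintype.card (Fin (n + 1)))) :
    MapsTo (positions π) (Set.Iic n) (Set.Iic n) := by
  intro k _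
  exact Set.mem_Iic.2 (Nat.le_of_lt_succ ((π k).isLt.trans_eq (Fintype.card_fin _)))

theorem natCast_injOn : InjOn (fun k : ℕ => (k : Fin (n + 1))) (Set.Iic n) := by
  intro i hi j hj h
  have := congrArg Fin.val h
  rwa [Fin.val_cast_of_lt (Nat.lt_succ_of_le hi), Fin.val_cast_of_lt (Nat.lt_succ_of_le hj)]
    at this

theorem positions_injOn (π : Fin (n + 1) ≃ Fin (Fintype.card (Fin (n + 1)))) :
    InjOn (positions π) (Set.Iic n) :=
  fun _ hi _ hj h => natCast_injOn hi hj (π.injective (Fin.ext h))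

theorem exists_positions_eqOn {p : ℕ → ℕ} (hmaps : MapsTo p (Set.Iic n) (Set.Iic n))
    (hinj : InjOn p (Set.Iic n)) :
    ∃ π : Fin (n + 1) ≃ Fin (Fintype.card (Fin (n + 1))), EqOn (positions π) p (Set.Iic n) := by
  let f : Fin (n + 1) → Fin (n + 1) := fun k =>
    ⟨p k, Nat.lt_succ_of_le (hmaps (Set.mem_Iic.2 (Nat.le_of_lt_succ k.isLt)))⟩
  have hf : Function.Injective f := fun i j h => Fin.ext <|
    hinj (Set.mem_Iic.2 (Nat.le_of_lt_succ i.isLt)) (Set.mem_Iic.2 (Nat.le_of_lt_succ j.isLt))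
      (congrArg Fin.val h)
  refine ⟨(Equiv.ofBijective f hf.bijective_of_finite).trans (finCongr (Fintype.card_fin _).symm),
    fun k hk => ?_⟩
  simp [positions, f, Fin.val_cast_of_lt (Nat.lt_succ_of_le hk)]

theorem pathGraph_adj_natCast {k : ℕ} (hk : k < n) :
    (pathGraph (n + 1)).Adj (k : Fin (n + 1)) ((k + 1 : ℕ) : Fin (n + 1)) := by
  rw [pathGraph_adj, Fin.val_cast_of_lt (by omega), Fin.val_cast_of_lt (by omega)]
  exact Or.inl rfl

theorem exists_positions_of_adj (π : Fin (n + 1) ≃ Fin (Fintype.card (Fin (n + 1))))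
    {u v : Fin (n + 1)} (h : (pathGraph (n + 1)).Adj u v) :
    ∃ k < n, (positions π k = π u ∧ positions π (k + 1) = π v) ∨
      (positions π k = π v ∧ positions π (k + 1) = π u) := by
  rcases pathGraph_adj.1 h with h | h
  · exact ⟨u, by omega, Or.inl ⟨by simp [positions], by simp [positions, h]⟩⟩
  · exact ⟨v, by omega, Or.inr ⟨by simp [positions], by simp [positions, h]⟩⟩

theorem nonCrossing_positions_of_planar {π : Fin (n + 1) ≃ Fin (Fintype.card (Fin (n + 1)))}
    (h : Planar (pathGraph (n + 1)) π) : NonCrossing (positions π) n :=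
  fun _ hi _ hj =>
    not_intervalsCross_of_planar h (pathGraph_adj_natCast hi) (pathGraph_adj_natCast hj)

theorem planar_of_nonCrossing_positions {π : Fin (n + 1) ≃ Fin (Fintype.card (Fin (n + 1)))}
    (h : NonCrossing (positions π) n) : Planar (pathGraph (n + 1)) π := by
  intro s t u v hst huv h₁ h₂ h₃ ⟨h₄, h₅⟩
  obtain ⟨k, hk, hkst⟩ := exists_positions_of_adj π hst
  obtain ⟨l, hl, hluv⟩ := exists_positions_of_adj π huv
  have := h k hk l hl
  simp only [Fin.lt_def] at h₁ h₂ h₃ h₄ h₅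
  unfold IntervalsCross at this
  omega

theorem edgeSet_pathGraph_succ : (pathGraph (n + 1)).edgeSet =
    (fun k : ℕ => s((k : Fin (n + 1)), ((k + 1 : ℕ) : Fin (n + 1)))) '' Set.Iio n := by
  ext e
  induction e using Sym2.ind with
  | _ u v =>
    constructor
    · intro h
      rw [mem_edgeSet, pathGraph_adj] at h
      rcases h with h | h
      · refine ⟨u, by simp; omega, ?_⟩
        beta_reduce
        rw [h, Fin.cast_val_eq_self, Fin.cast_val_eq_self]
      · refine ⟨v, by simp; omega, ?_⟩
        beta_reduce
        rw [h, Fin.cast_val_eq_self, Fin.cast_val_eq_self, Sym2.eq_swap]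
    · rintro ⟨k, hk, he⟩
      rw [← he, mem_edgeSet]
      exact pathGraph_adj_natCast hk

theorem edgeLen_mk {V : Type*} [Fintype V] (π : V ≃ Fin (Fintype.card V)) (u v : V) :
    edgeLen π s(u, v) = Nat.dist (π u) (π v) := by
  simp only [edgeLen, Sym2.lift_mk, Nat.dist]
  omega

theorem cost_pathGraph_succ (π : Fin (n + 1) ≃ Fin (Fintype.card (Fin (n + 1)))) :
    cost (pathGraph (n + 1)) π = walkLength (positions π) n := by
  rw [cost, edgeSet_pathGraph_succ, finsum_mem_image, ← coe_range, finsum_mem_coe_finset]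
  · simp only [edgeLen_mk, walkLength, positions]
  · intro i hi j hj h
    have hi : i < n := hi
    have hj : j < n := hj
    rcases Sym2.eq_iff.1 h with ⟨h, -⟩ | ⟨h, h'⟩
    · exact natCast_injOn (Set.mem_Iic.2 hi.le) (Set.mem_Iic.2 hj.le) h
    · have : i = j + 1 := natCast_injOn (Set.mem_Iic.2 hi.le) (Set.mem_Iic.2 hj) h
      have : i + 1 = j := natCast_injOn (Set.mem_Iic.2 hi) (Set.mem_Iic.2 hj.le) h'
      omega

theorem cost_pathGraph_zero (π : Fin 0 ≃ Fin (Fintype.card (Fin 0))) :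
    cost (pathGraph 0) π = 0 := by
  simp [cost, Set.eq_empty_of_isEmpty]

theorem cost_le_choose_of_planar {n : ℕ} {π : Fin n ≃ Fin (Fintype.card (Fin n))}
    (h : Planar (pathGraph n) π) : cost (pathGraph n) π ≤ n.choose 2 := by
  cases n with
  | zero => simp [cost_pathGraph_zero]
  | succ n =>
    rw [cost_pathGraph_succ]
    exact walkLength_le_choose (positions_mapsTo π) (positions_injOn π)
      (nonCrossing_positions_of_planar h)

theorem exists_planar_cost_eq_choose (n : ℕ) : ∃ π : Fin n ≃ Fin (Fintype.card (Fin n)),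
    Planar (pathGraph n) π ∧ cost (pathGraph n) π = n.choose 2 := by
  cases n with
  | zero => exact ⟨Fintype.equivFin _, fun s => s.elim0, cost_pathGraph_zero _⟩
  | succ n =>
    obtain ⟨π, hπ⟩ := exists_positions_eqOn (zigzag_mapsTo n) (zigzag_injOn n)
    refine ⟨π, planar_of_nonCrossing_positions ((nonCrossing_zigzag n).congr hπ.symm), ?_⟩
    rw [cost_pathGraph_succ, walkLength_congr hπ, walkLength_zigzag]

end PathArrangement

end LinearArrangement

/-- The path graph `L_n` has a planar arrangement of cost `n choose 2`, and
consequently its maximum planar arrangement cost is `n choose 2`. -/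
theorem path_maxPlanar (n : ℕ) :
    (∃ π : Fin n ≃ Fin (Fintype.card (Fin n)),
        Planar (SimpleGraph.pathGraph n) π ∧
        cost (SimpleGraph.pathGraph n) π = n.choose 2) ∧
    maxPlanar (SimpleGraph.pathGraph n) = n.choose 2 := by
  have hzigzag := LinearArrangement.exists_planar_cost_eq_choose n
  refine ⟨hzigzag, IsGreatest.csSup_eq ⟨hzigzag, ?_⟩⟩
  rintro _ ⟨π, hπ, rfl⟩
  exact LinearArrangement.cost_le_choose_of_planar hπ
end

section
/- In any planar linear arrangement of a tree on n vertices, the total cost is at most C(n,2) = n(n-1)/2. -/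
open SimpleGraph

attribute [local instance] Classical.propDecidable

/-
For every `k`, at most `n - k` edges have length `≥ k`. Take a shortest such edge `xy`: by
planarity and minimality no edge of length `≥ k` has an endpoint strictly between `x` and `y`,
so these edges form a forest on the `n - (|xy| - 1) ≤ n - k + 1` remaining vertices. Summing,
`cost = ∑_{k<n} #{edges longer than k} ≤ ∑_{k<n} (n - 1 - k) = n(n-1)/2`.
-/

open Finset

namespace Finset

theorem sum_eq_sum_range_card_filter_lt {α : Type*} (s : Finset α) (f : α → ℕ) {m : ℕ}
    (hf : ∀ a ∈ s, f a ≤ m) : ∑ a ∈ s, f a = ∑ k ∈ range m, #{a ∈ s | k < f a} := by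
  calc ∑ a ∈ s, f a = ∑ a ∈ s, ∑ k ∈ range m, if k < f a then 1 else 0 := by
        refine sum_congr rfl fun a ha => ?_
        have hfilter : {k ∈ range m | k < f a} = range (f a) := by
          ext k
          simp only [mem_filter, mem_range]
          have := hf a ha
          omega
        rw [sum_boole, Nat.cast_id, hfilter, card_range]
    _ = ∑ k ∈ range m, #{a ∈ s | k < f a} := by
        rw [sum_comm]
        simp only [sum_boole, Nat.cast_id]

theorem sum_range_sub_one_sub (n : ℕ) : ∑ k ∈ range n, (n - 1 - k) = n.choose 2 := by
  rw [sum_range_reflect (fun k => k) n, sum_range_id, Nat.choose_two_right]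

end Finset

namespace SimpleGraph

variable {V : Type*} {G : SimpleGraph V}

theorem IsAcyclic.card_edgeFinset_lt [Fintype V] [Nonempty V] (hG : G.IsAcyclic) :
    #G.edgeFinset < Fintype.card V := by
  obtain ⟨T, hGT, -, hT⟩ := connected_top.exists_isTree_le_of_le_of_isAcyclic le_top hG
  rw [← hT.card_edgeFinset, Nat.lt_succ_iff]
  exact card_le_card (edgeFinset_mono hGT)

theorem IsAcyclic.card_lt_of_forall_mem (hG : G.IsAcyclic) {F : Finset (Sym2 V)}
    (hF : ↑F ⊆ G.edgeSet) {S : Finset V} (hS : S.Nonempty) (hFS : ∀ e ∈ F, ∀ v ∈ e, v ∈ S) :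
    #F < #S := by
  have : Nonempty S := hS.coe_sort
  have hsurj : Set.SurjOn (Sym2.map Subtype.val)
      ((G.induce (S : Set V)).edgeFinset : Set (Sym2 S)) F := by
    intro e he
    induction e using Sym2.ind with
    | _ u v =>
      refine ⟨s(⟨u, hFS _ he u (Sym2.mem_mk_left u v)⟩, ⟨v, hFS _ he v (Sym2.mem_mk_right u v)⟩),
        ?_, rfl⟩
      simpa using hF he
  calc #F ≤ #(G.induce S).edgeFinset := card_le_card_of_surjOn _ hsurj
    _ < Fintype.card S := (hG.induce S).card_edgeFinset_lt
    _ = #S := Fintype.card_coe S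

end SimpleGraph

section Arrangement

variable {V : Type*} [Fintype V] {G : SimpleGraph V} {π : V ≃ Fin (Fintype.card V)}

theorem edgeLen_mk (π : V ≃ Fin (Fintype.card V)) (u v : V) :
    edgeLen π s(u, v) = ((π u : ℤ) - π v).natAbs :=
  rfl

theorem edgeLen_lt_card (π : V ≃ Fin (Fintype.card V)) (e : Sym2 V) :
    edgeLen π e < Fintype.card V := by
  induction e using Sym2.ind with
  | _ u v =>
    have := (π u).isLt
    have := (π v).isLt
    rw [edgeLen_mk]
    omega

theorem cost_eq_sum_edgeFinset : cost G π = ∑ e ∈ G.edgeFinset, edgeLen π e := by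
  rw [cost, ← SimpleGraph.coe_edgeFinset, finsum_mem_coe_finset]

theorem card_filter_mem_Ioo (π : V ≃ Fin (Fintype.card V)) (a b : Fin (Fintype.card V)) :
    #{w | π w ∈ Ioo a b} = (b : ℕ) - a - 1 := by
  rw [← Fin.card_Ioo, ← card_map π.toEmbedding]
  congr 1
  ext i
  simp

theorem exists_adj_lt_and_eq_mk {e : Sym2 V} (he : e ∈ G.edgeSet) :
    ∃ x y, G.Adj x y ∧ π x < π y ∧ e = s(x, y) := by
  induction e using Sym2.ind with
  | _ u v =>
    have huv : G.Adj u v := he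
    rcases lt_or_gt_of_ne (π.injective.ne huv.ne) with h | h
    · exact ⟨u, v, huv, h, rfl⟩
    · exact ⟨v, u, huv.symm, h, Sym2.eq_swap⟩

theorem Planar.notMem_Ioo_of_edgeLen_le {x y u w : V} (hπ : Planar G π) (hxy : G.Adj x y)
    (hlt : π x < π y) (huw : G.Adj u w) (hlen : edgeLen π s(x, y) ≤ edgeLen π s(u, w)) :
    π u ∉ Ioo (π x) (π y) := by
  intro hu
  obtain ⟨hxu, huy⟩ := mem_Ioo.mp hu
  rw [edgeLen_mk, edgeLen_mk] at hlen
  -- `w` inside `[π x, π y]` would make `uw` shorter than `xy`; outside, `uw` crosses `xy`.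
  rcases lt_or_ge (π w) (π x) with hwx | hxw
  · exact hπ huw.symm hxy (hwx.trans hxu) hlt hwx ⟨hxu, huy⟩
  rcases lt_or_ge (π y) (π w) with hyw | hwy
  · exact hπ hxy huw hlt (huy.trans hyw) hxu ⟨huy, hyw⟩
  rw [Fin.lt_def] at hlt hxu huy
  rw [Fin.le_def] at hxw hwy
  omega

theorem Planar.card_filter_le_edgeLen_le (hπ : Planar G π) (hG : G.IsAcyclic) (k : ℕ) :
    #{e ∈ G.edgeFinset | k ≤ edgeLen π e} ≤ Fintype.card V - k := by
  set F := {e ∈ G.edgeFinset | k ≤ edgeLen π e}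
  rcases F.eq_empty_or_nonempty with hF | hF
  · simp [hF]
  obtain ⟨e₀, he₀, hmin⟩ := F.exists_min_image (edgeLen π) hF
  have hFG : ↑F ⊆ G.edgeSet := fun e he => SimpleGraph.mem_edgeFinset.mp (mem_filter.mp he).1
  obtain ⟨x, y, hxy, hlt, rfl⟩ := exists_adj_lt_and_eq_mk (hFG he₀)
  set S : Finset V := {w | π w ∉ Ioo (π x) (π y)}
  have hFS : ∀ e ∈ F, ∀ w ∈ e, w ∈ S := by
    intro e he w hw
    obtain ⟨w', rfl⟩ := Sym2.mem_iff_exists.mp hw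
    simpa [S] using hπ.notMem_Ioo_of_edgeLen_le hxy hlt (hFG he) (hmin _ he)
  have hS : #S + ((π y : ℕ) - π x - 1) = Fintype.card V := by
    rw [← card_filter_mem_Ioo π, add_comm]
    exact card_filter_add_card_filter_not _
  have hcard : #F < #S := hG.card_lt_of_forall_mem hFG ⟨x, by simp [S]⟩ hFS
  have hk : k ≤ edgeLen π s(x, y) := (mem_filter.mp he₀).2
  rw [edgeLen_mk] at hk
  rw [Fin.lt_def] at hlt
  omega

end Arrangement

/-- In any planar arrangement of a tree on `n` vertices, the cost is at most
`n choose 2`. -/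
theorem planar_cost_le_choose (n : ℕ) (G : SimpleGraph (Fin n)) (hG : G.IsTree)
    (π : Fin n ≃ Fin (Fintype.card (Fin n))) (hπ : Planar G π) :
    cost G π ≤ n.choose 2 := by
  have hlen : ∀ e ∈ G.edgeFinset, edgeLen π e ≤ n := fun e _ => by
    simpa using (edgeLen_lt_card π e).le
  have hlong : ∀ k, #{e ∈ G.edgeFinset | k < edgeLen π e} ≤ n - 1 - k := fun k => by
    simpa [Nat.sub_sub, add_comm] using hπ.card_filter_le_edgeLen_le hG.isAcyclic (k + 1)
  calc cost G π = ∑ e ∈ G.edgeFinset, edgeLen π e := cost_eq_sum_edgeFinset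
    _ = ∑ k ∈ range n, #{e ∈ G.edgeFinset | k < edgeLen π e} :=
      sum_eq_sum_range_card_filter_lt _ _ hlen
    _ ≤ ∑ k ∈ range n, (n - 1 - k) := sum_le_sum fun k _ => hlong k
    _ = n.choose 2 := sum_range_sub_one_sub n
end

section
/- For a free tree T, the maximum planar arrangement cost equals the maximum over all vertices u of the maximum projective arrangement cost of T rooted at u: D_max^pl(T) = max_{u∈V} D_max^pr(T^u). -/
open SimpleGraph

attribute [local instance] Classical.propDecidable

/-- For a free tree `T`, the maximum planar cost equals the maximum over all
vertices `u` of the maximum projective cost of `T` rooted at `u`. -/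
theorem maxPlanar_eq_sup_maxProj (n : ℕ) (hn : 0 < n)
    (G : SimpleGraph (Fin n)) (hG : G.IsTree) :
    maxPlanar G = Finset.univ.sup (fun u : Fin n => maxProj G u) := by
  haveI : NeZero (Fintype.card (Fin n)) := ⟨by simpa using hn.ne'⟩
  have hbdd : BddAbove {c | ∃ π : Fin n ≃ Fin (Fintype.card (Fin n)),
      Planar G π ∧ cost G π = c} := by
    apply Set.Finite.bddAbove
    apply Set.Finite.subset (Set.finite_range (cost G))
    rintro c ⟨π, _, rfl⟩; exact ⟨π, rfl⟩
  apply le_antisymm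
  · apply csSup_le'
    rintro c ⟨π, hpl, rfl⟩
    have hproj : Projective G (π.symm 0) π := by
      refine ⟨hpl, ?_⟩
      rintro a b hab ⟨h1, -⟩
      rw [Equiv.apply_symm_apply] at h1
      exact absurd h1 (by simp)
    have h1 : cost G π ≤ maxProj G (π.symm 0) := by
      apply le_csSup
      · apply Set.Finite.bddAbove
        apply Set.Finite.subset (Set.finite_range (cost G))
        rintro c ⟨π, _, rfl⟩; exact ⟨π, rfl⟩
      · exact ⟨π, hproj, rfl⟩
    exact h1.trans (Finset.le_sup (Finset.mem_univ _))
  · apply Finset.sup_le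
    intro u _
    apply csSup_le'
    rintro c ⟨π, ⟨hpl, -⟩, rfl⟩
    exact le_csSup hbdd ⟨π, hpl, rfl⟩
end

section
/- For a free tree T and any edge uv, letting f(u,v) = (deg(u) − j)·n_u(v) + Σ_{i=1}^{j} s_i(u), where j is the rank of the subtree containing v among the immediate subtrees of T rooted at u sorted non-increasingly by size, s_i(u) is the size of the i-th largest immediate subtree of T rooted at u, and n_u(v) is the size of the component of v when uv is removed, the following holds: D_max^pr(T^v) − D_max^pr(T^u) = f(v,u) − f(u,v). -/
open SimpleGraph

attribute [local instance] Classical.propDecidable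

/-!
Let the immediate subtrees `T_1, …, T_k` of `T^r`, rooted at the neighbours `c_i` of `r`, have
sizes `s_1 ≥ ⋯ ≥ s_k`. Then `D(T^r) = ∑ D(T_i^{c_i}) + ∑ (k - i + 1) s_i`. In a projective
arrangement each `T_i` occupies an interval, so the edge `r c_i` is no longer than `T_i` together
with the subtrees lying entirely below it; the subtree holding the vertex farthest from `r` lies
below no other root edge, and peeling such subtrees off one at a time bounds the root edges by
`∑ (k - i + 1) s_i`. Conversely, `r` followed by `T_1, …, T_k`, each arranged optimally with its
root last, is projective and attains the bound.

Deleting the entry of rank `j` from the sorted sizes lowers `∑ (k - i + 1) s_i` by exactly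
`f(u,v) = (k - j) s_j + ∑_{i ≤ j} s_i`. Applying the recurrence to `T^u` and to the component of
`u` in `T - uv` thus gives `D(T^u) = D(A^v) + D(B^u) + f(u,v)`, where `A ∋ v` and `B ∋ u` are the
components of `T - uv`; subtracting the same identity for `T^v` proves the theorem.
-/

namespace TreeArrangement

open Finset

/-! ### Sums over sizes sorted non-increasingly -/

section SortedSums

variable {k : ℕ}

/-- With `0`-based indices, this is `∑ (k - i + 1) s_i` of the header. -/
def rankWeightedSum (s : Fin k → ℕ) : ℕ := ∑ i : Fin k, (k - i) * s i

def prefixSum (s : Fin k → ℕ) (t : ℕ) : ℕ := ∑ i : Fin k with i.val < t, s i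

lemma prefixSum_succ (s : Fin k → ℕ) (i : Fin k) :
    prefixSum s ((i : ℕ) + 1) = prefixSum s i + s i := by
  have : ({j | j.val < (i : ℕ) + 1} : Finset (Fin k)) =
      insert i ({j | j.val < i.val} : Finset (Fin k)) := by
    ext j
    simp only [mem_filter_univ, mem_insert, Fin.ext_iff]
    omega
  rw [prefixSum, this, sum_insert (by simp), add_comm, prefixSum]

lemma prefixSum_mono (s : Fin k → ℕ) : Monotone (prefixSum s) :=
  fun _ _ h => sum_le_sum_of_subset fun j => by simp only [mem_filter_univ]; omega

lemma prefixSum_le_sum (s : Fin k → ℕ) (t : ℕ) : prefixSum s t ≤ ∑ i, s i :=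
  sum_le_sum_of_subset (filter_subset _ _)

lemma sum_prefixSum_succ (s : Fin k → ℕ) :
    ∑ i : Fin k, prefixSum s ((i : ℕ) + 1) = rankWeightedSum s := by
  rw [Fin.sum_univ_eq_sum_range (fun t => prefixSum s (t + 1))]
  simp only [prefixSum, sum_filter]
  rw [sum_comm]
  refine sum_congr rfl fun i _ => ?_
  rw [← sum_filter, sum_const, smul_eq_mul]
  congr 1
  have : {t ∈ range k | i.val < t + 1} = Ico i.val k := by
    ext t
    simp only [mem_filter, mem_range, mem_Ico]
    omega
  rw [this, Nat.card_Ico]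

lemma sum_le_prefixSum_of_antitone {s : Fin k → ℕ} (hs : Antitone s) {t : ℕ}
    (F : Finset (Fin k)) (hF : #F ≤ t) : ∑ j ∈ F, s j ≤ prefixSum s t := by
  unfold prefixSum
  set P : Finset (Fin k) := {i | i.val < t}
  refine sum_sdiff_le_sum_sdiff.mp ?_
  rcases lt_or_ge t k with htk | htk
  · have hcard : #(F \ P) ≤ #(P \ F) := by
      have hP : #P = t := by rw [Fin.card_filter_val_lt]; omega
      have := card_sdiff_add_card_inter F P
      have := card_sdiff_add_card_inter P F
      rw [inter_comm] at this
      omega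
    calc ∑ j ∈ F \ P, s j ≤ #(F \ P) • s ⟨t, htk⟩ :=
          sum_le_card_nsmul _ _ _ fun j hj => hs (by simp [P, Fin.le_def] at hj ⊢; omega)
      _ ≤ #(P \ F) • s ⟨t, htk⟩ := smul_le_smul_of_nonneg_right hcard (Nat.zero_le _)
      _ ≤ ∑ i ∈ P \ F, s i :=
          card_nsmul_le_sum _ _ _ fun i hi => hs (by simp [P, Fin.le_def] at hi ⊢; omega)
  · have : F \ P = ∅ := by
      ext j
      simp only [mem_sdiff, mem_filter, mem_univ, true_and, P, notMem_empty, iff_false]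
      omega
    simp [this]

lemma rankWeightedSum_succ (s : Fin (k + 1) → ℕ) :
    rankWeightedSum s = (k + 1) * s 0 + rankWeightedSum (fun i => s i.succ) := by
  simp [rankWeightedSum, Fin.sum_univ_succ]

lemma sum_Iic_succ (s : Fin (k + 2) → ℕ) (j : Fin (k + 1)) :
    ∑ i ∈ Iic j.succ, s i = s 0 + ∑ i ∈ Iic j, s i.succ := by
  simp only [← filter_ge_eq_Iic, sum_filter, Fin.sum_univ_succ (n := k + 1), Fin.succ_le_succ_iff,
    Fin.zero_le, if_true]

lemma rankWeightedSum_eq_succAbove : ∀ {k : ℕ} (s : Fin (k + 1) → ℕ) (j : Fin (k + 1)),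
    rankWeightedSum s =
      rankWeightedSum (s ∘ j.succAbove) + ((k + 1 - ((j : ℕ) + 1)) * s j + ∑ i ∈ Iic j, s i)
  | k, s, j => by
    cases j using Fin.cases with
    | zero =>
      rw [rankWeightedSum_succ, Fin.succAbove_zero, show Iic (0 : Fin (k + 1)) = {0} from Iic_bot]
      simp [Function.comp_def]
      ring
    | succ j =>
      cases k with
      | zero => exact j.elim0
      | succ k =>
        rw [rankWeightedSum_succ, rankWeightedSum_succ (s ∘ _), sum_Iic_succ,
          rankWeightedSum_eq_succAbove (fun i => s i.succ) j]
        simp [Fin.succ_succAbove_succ, Function.comp_def]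
        ring

section TopSum

variable (s : Fin k → ℕ)

noncomputable def topSum (t : ℕ) (B : Finset (Fin k)) : ℕ :=
  {F ∈ B.powerset | #F ≤ t}.sup fun F => ∑ j ∈ F, s j

variable {s}

lemma sum_le_topSum {t : ℕ} {B F : Finset (Fin k)} (hFB : F ⊆ B) (hF : #F ≤ t) :
    ∑ j ∈ F, s j ≤ topSum s t B :=
  le_sup (f := fun F => ∑ j ∈ F, s j) (mem_filter.mpr ⟨mem_powerset.mpr hFB, hF⟩)

lemma topSum_le {t : ℕ} {B : Finset (Fin k)} {X : ℕ}
    (h : ∀ F ⊆ B, #F ≤ t → ∑ j ∈ F, s j ≤ X) : topSum s t B ≤ X :=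
  Finset.sup_le fun F hF => h F (mem_powerset.mp (mem_filter.mp hF).1) (mem_filter.mp hF).2

lemma topSum_mono {t : ℕ} {B B' : Finset (Fin k)} (h : B ⊆ B') : topSum s t B ≤ topSum s t B' :=
  topSum_le fun _ hF hFt => sum_le_topSum (hF.trans h) hFt

/-- Remove from `B` the index `j₀` that no other `T i` contains: its own `T j₀ ∩ B` has at most
`#B` elements, and for the others nothing changes. -/
lemma sum_sum_inter_le_sum_topSum (T : Fin k → Finset (Fin k))
    (hT : ∀ B : Finset (Fin k), B.Nonempty → ∃ j ∈ B, ∀ i ∈ B, i ≠ j → j ∉ T i)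
    (B : Finset (Fin k)) :
    ∑ i ∈ B, ∑ j ∈ T i ∩ B, s j ≤ ∑ t ∈ range #B, topSum s (t + 1) B := by
  induction hB : #B generalizing B with
  | zero => simp [card_eq_zero.mp hB]
  | succ n ih =>
    obtain ⟨j₀, hj₀B, hj₀⟩ := hT B (card_pos.mp (by omega))
    have hrest : ∑ i ∈ B.erase j₀, ∑ j ∈ T i ∩ B, s j ≤ ∑ t ∈ range n, topSum s (t + 1) B := by
      have hinter : ∀ i ∈ B.erase j₀, T i ∩ B = T i ∩ B.erase j₀ := fun i hi => by
        ext x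
        simp only [mem_inter, mem_erase]
        refine ⟨fun ⟨h1, h2⟩ => ⟨h1, ?_, h2⟩, fun ⟨h1, _, h2⟩ => ⟨h1, h2⟩⟩
        rintro rfl
        exact hj₀ i (mem_of_mem_erase hi) (ne_of_mem_erase hi) h1
      rw [sum_congr rfl fun i hi => by rw [hinter i hi]]
      refine (ih (B.erase j₀) (by rw [card_erase_of_mem hj₀B, hB]; rfl)).trans ?_
      exact sum_le_sum fun t _ => topSum_mono (erase_subset _ _)
    have hj₀sum : ∑ j ∈ T j₀ ∩ B, s j ≤ topSum s (n + 1) B :=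
      sum_le_topSum inter_subset_right ((card_le_card inter_subset_right).trans_eq hB)
    rw [← sum_erase_add B _ hj₀B, sum_range_succ]
    omega

end TopSum

lemma sum_sum_le_rankWeightedSum {s : Fin k → ℕ} (hs : Antitone s)
    (T : Fin k → Finset (Fin k))
    (hT : ∀ B : Finset (Fin k), B.Nonempty → ∃ j ∈ B, ∀ i ∈ B, i ≠ j → j ∉ T i) :
    ∑ i, ∑ j ∈ T i, s j ≤ rankWeightedSum s := by
  calc ∑ i, ∑ j ∈ T i, s j = ∑ i, ∑ j ∈ T i ∩ univ, s j := by simp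
    _ ≤ ∑ t ∈ range k, topSum s (t + 1) univ := by
      simpa using sum_sum_inter_le_sum_topSum T hT univ
    _ ≤ ∑ t ∈ range k, prefixSum s (t + 1) :=
      sum_le_sum fun t _ => topSum_le fun F _ hF => sum_le_prefixSum_of_antitone hs F hF
    _ = rankWeightedSum s := by
      rw [← sum_prefixSum_succ, Fin.sum_univ_eq_sum_range (fun t => prefixSum s (t + 1))]

end SortedSums

/-! ### Components of a tree minus an edge -/

section Components

variable {V : Type} {G : SimpleGraph V} {r u v w x y : V}

lemma reachable_induce_of_support_subset {S : Set V} {H : SimpleGraph V} (hle : H ≤ G) {a b : V}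
    (W : H.Walk a b) (ha : a ∈ S) (hb : b ∈ S) (hW : ∀ z ∈ W.support, z ∈ S) :
    (G.induce S).Reachable ⟨a, ha⟩ ⟨b, hb⟩ := by
  induction W with
  | nil => rfl
  | @cons a a' b h W ih =>
    have ha' : a' ∈ S := hW a' (by simp)
    exact (Adj.reachable (hle h) : (G.induce S).Reachable ⟨a, ha⟩ ⟨a', ha'⟩).trans
      (ih ha' hb fun z hz => hW z (by simp [hz]))

lemma reachable_induce_iff {H : SimpleGraph V} {K : Set V} {a b : V} (ha : a ∈ K) (hb : b ∈ K)
    (hK : ∀ y, H.Reachable a y → y ∈ K) :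
    (H.induce K).Reachable ⟨a, ha⟩ ⟨b, hb⟩ ↔ H.Reachable a b := by
  refine ⟨fun h => h.map (Embedding.induce K).toHom, fun ⟨W⟩ => ?_⟩
  exact reachable_induce_of_support_subset le_rfl W ha hb
    fun z hz => hK z ⟨W.takeUntil z hz⟩

lemma induce_deleteEdges {K : Set V} (a b : K) :
    (G.induce K).deleteEdges {s(a, b)} = (G.deleteEdges {s(a.1, b.1)}).induce K := by
  ext p q
  simp only [deleteEdges_adj, comap_adj, Function.Embedding.subtype_apply,
    Set.mem_singleton_iff, Sym2.eq_iff, Subtype.ext_iff]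

def compSet (G : SimpleGraph V) (u v : V) : Set V :=
  {y | (G.deleteEdges {s(u, v)}).Reachable v y}

lemma mem_compSet_self (G : SimpleGraph V) (u v : V) : v ∈ compSet G u v :=
  Reachable.refl v

lemma not_reachable_deleteEdges (hG : G.IsTree) (huv : G.Adj u v) :
    ¬ (G.deleteEdges {s(u, v)}).Reachable u v :=
  isBridge_iff.mp <| isAcyclic_iff_forall_adj_isBridge.mp hG.isAcyclic huv

lemma notMem_compSet (hG : G.IsTree) (huv : G.Adj u v) : u ∉ compSet G u v :=
  fun h => not_reachable_deleteEdges hG huv h.symm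

lemma mem_compSet_of_mem_support {a b z : V} (ha : a ∈ compSet G u v)
    (W : (G.deleteEdges {s(u, v)}).Walk a b) (hz : z ∈ W.support) : z ∈ compSet G u v :=
  ha.trans ⟨W.takeUntil z hz⟩

lemma mem_compSet_of_adj (hx : x ∈ compSet G u v) (hxu : x ≠ u) (hxy : G.Adj x y)
    (hyu : y ≠ u) : y ∈ compSet G u v := by
  refine hx.trans (Adj.reachable ?_)
  rw [deleteEdges_adj]
  refine ⟨hxy, ?_⟩
  simp only [Set.mem_singleton_iff, Sym2.eq_iff]
  tauto

lemma exists_adj_mem_compSet (hG : G.IsTree) (hx : x ≠ r) :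
    ∃ w, G.Adj r w ∧ x ∈ compSet G r w := by
  obtain ⟨W⟩ := hG.connected.preconnected r x
  obtain ⟨p, hp⟩ : ∃ p : G.Walk r x, p.IsPath := ⟨W.toPath.1, W.toPath.2⟩
  cases p with
  | nil => exact absurd rfl hx
  | @cons _ w _ hrw p =>
    rw [Walk.cons_isPath_iff] at hp
    refine ⟨w, hrw, ⟨p.transfer _ fun e he => ?_⟩⟩
    rw [edgeSet_deleteEdges]
    refine ⟨p.edges_subset_edgeSet he, ?_⟩
    rintro rfl
    exact hp.2 (p.fst_mem_support_of_mem_edges he)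

/-- Every walk inside `compSet G u v` avoids `u`, so it survives the deletion of any edge at `u`. -/
lemma reachable_deleteEdges_of_mem_compSet (hG : G.IsTree) (huv : G.Adj u v) {a b : V}
    (ha : a ∈ compSet G u v) (hab : (G.deleteEdges {s(u, v)}).Reachable a b) (w : V) :
    (G.deleteEdges {s(u, w)}).Reachable a b := by
  obtain ⟨W⟩ := hab
  refine ⟨W.transfer _ fun e he => ?_⟩
  have hGe := W.edges_subset_edgeSet he
  rw [edgeSet_deleteEdges] at hGe ⊢
  refine ⟨hGe.1, ?_⟩
  rintro rfl
  exact notMem_compSet hG huv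
    (mem_compSet_of_mem_support ha W (W.fst_mem_support_of_mem_edges he))

lemma disjoint_compSet {w' : V} (hG : G.IsTree) (hw : G.Adj r w) (hw' : G.Adj r w')
    (hne : w ≠ w') : Disjoint (compSet G r w) (compSet G r w') := by
  refine Set.disjoint_left.mpr fun x hx hx' => ?_
  have hww' : (G.deleteEdges {s(r, w)}).Reachable w w' :=
    hx.trans (reachable_deleteEdges_of_mem_compSet hG hw' (mem_compSet_self G r w') hx' w).symm
  have hw'r : (G.deleteEdges {s(r, w)}).Adj w' r := by
    rw [deleteEdges_adj]
    refine ⟨hw'.symm, ?_⟩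
    simp only [Set.mem_singleton_iff, Sym2.eq_iff]
    grind [hw'.ne]
  exact not_reachable_deleteEdges hG hw (hww'.trans hw'r.reachable).symm

lemma compSet_subset_compSet (hG : G.IsTree) (huv : G.Adj u v) (hvx : G.Adj v x) (hxu : x ≠ u) :
    compSet G v x ⊆ compSet G u v := by
  intro y hy
  have hxK : x ∈ compSet G u v := mem_compSet_of_adj (mem_compSet_self G u v) huv.ne' hvx hxu
  have := reachable_deleteEdges_of_mem_compSet hG hvx (mem_compSet_self G v x) hy u
  rw [Sym2.eq_swap] at this
  exact hxK.trans this

lemma reachable_deleteEdges_of_notMem_compSet (hG : G.IsTree) (hrw : G.Adj r w)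
    (hy : y ∉ compSet G r w) : (G.deleteEdges {s(r, w)}).Reachable r y := by
  by_cases hyr : y = r
  · subst hyr
    rfl
  obtain ⟨w', hw', hyw'⟩ := exists_adj_mem_compSet hG hyr
  have hww' : w' ≠ w := by
    rintro rfl
    exact hy hyw'
  have hrw' : (G.deleteEdges {s(r, w)}).Adj r w' := by
    rw [deleteEdges_adj]
    refine ⟨hw', ?_⟩
    simp only [Set.mem_singleton_iff, Sym2.eq_iff]
    grind [hrw.ne]
  exact hrw'.reachable.trans
    (reachable_deleteEdges_of_mem_compSet hG hw' (mem_compSet_self G r w') hyw' w)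

lemma isTree_induce_compSet (hG : G.IsTree) :
    (G.induce (compSet G r w)).IsTree := by
  have hroot : ∀ a (ha : a ∈ compSet G r w),
      (G.induce (compSet G r w)).Reachable ⟨w, mem_compSet_self G r w⟩ ⟨a, ha⟩ := by
    intro a ha
    obtain ⟨W⟩ := id ha
    exact reachable_induce_of_support_subset (deleteEdges_le _) W _ ha
      fun z hz => mem_compSet_of_mem_support (mem_compSet_self G r w) W hz
  refine ⟨(connected_iff_exists_forall_reachable _).mpr ⟨_, fun ⟨a, ha⟩ => hroot a ha⟩,
    fun x p hp => ?_⟩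
  exact hG.isAcyclic _
      ((Walk.isCycle_map_iff_of_injective Subtype.val_injective).mpr hp :
        (p.map (Embedding.induce _).toHom).IsCycle)

structure EnumeratesNeighbors (G : SimpleGraph V) (r : V) {k : ℕ} (c : Fin k → V) : Prop where
  injective : Function.Injective c
  adj : ∀ i, G.Adj r (c i)
  exists_eq : ∀ x, G.Adj r x → ∃ i, c i = x

namespace EnumeratesNeighbors

variable {k : ℕ} {c : Fin k → V}

lemma exists_mem_compSet (hG : G.IsTree) (hc : EnumeratesNeighbors G r c) (hx : x ≠ r) :
    ∃ i, x ∈ compSet G r (c i) := by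
  obtain ⟨w, hw, hxw⟩ := exists_adj_mem_compSet hG hx
  obtain ⟨i, rfl⟩ := hc.exists_eq w hw
  exact ⟨i, hxw⟩

lemma eq_of_mem_compSet (hG : G.IsTree) (hc : EnumeratesNeighbors G r c) {i j : Fin k}
    (hxi : x ∈ compSet G r (c i)) (hxj : x ∈ compSet G r (c j)) : i = j := by
  by_contra hij
  exact Set.disjoint_left.mp
    (disjoint_compSet hG (hc.adj i) (hc.adj j) (hc.injective.ne hij)) hxi hxj

lemma adj_cases (hG : G.IsTree) (hc : EnumeratesNeighbors G r c) {a b : V} (hab : G.Adj a b)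
    (hb : b ≠ r) :
    (a = r ∧ ∃ i, b = c i) ∨ ∃ i, a ∈ compSet G r (c i) ∧ b ∈ compSet G r (c i) := by
  by_cases ha : a = r
  · subst ha
    obtain ⟨i, rfl⟩ := hc.exists_eq b hab
    exact Or.inl ⟨rfl, i, rfl⟩
  · obtain ⟨i, hai⟩ := hc.exists_mem_compSet hG ha
    exact Or.inr ⟨i, hai, mem_compSet_of_adj hai ha hab hb⟩

lemma mem_compSet_of_ne (hc : EnumeratesNeighbors G u c) {i j : Fin k} (hj : c j = v)
    (hij : i ≠ j) : c i ∈ compSet G v u :=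
  mem_compSet_of_adj (mem_compSet_self G v u) (hj ▸ (hc.adj j).ne) (hc.adj i)
    (hj ▸ hc.injective.ne hij)

end EnumeratesNeighbors

lemma EnumeratesNeighbors.restrict {k : ℕ} {c : Fin (k + 1) → V} (hG : G.IsTree)
    (hc : EnumeratesNeighbors G u c) {j : Fin (k + 1)} (hj : c j = v) :
    EnumeratesNeighbors (G.induce (compSet G v u)) ⟨u, mem_compSet_self G v u⟩
      fun i => ⟨c (j.succAbove i), hc.mem_compSet_of_ne hj (Fin.succAbove_ne j i)⟩ where
  injective _ _ h := Fin.succAbove_right_injective (hc.injective (Subtype.ext_iff.mp h))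
  adj _ := hc.adj _
  exists_eq := by
    rintro ⟨x, hx⟩ hux
    obtain ⟨i, rfl⟩ := hc.exists_eq x hux
    obtain ⟨i, rfl⟩ := Fin.exists_succAbove_eq (x := i) (y := j) fun h =>
      notMem_compSet hG (hj ▸ (hc.adj j).symm) (by rwa [h, hj] at hx)
    exact ⟨i, rfl⟩

lemma compSet_induce_compSet (hG : G.IsTree) (huv : G.Adj u v) (hvx : G.Adj v x) (hxu : x ≠ u)
    (hxK : x ∈ compSet G u v) :
    compSet (G.induce (compSet G u v)) ⟨v, mem_compSet_self G u v⟩ ⟨x, hxK⟩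
      = Subtype.val ⁻¹' compSet G v x := by
  ext ⟨q, hq⟩
  change ((G.induce (compSet G u v)).deleteEdges {s(_, _)}).Reachable ⟨x, hxK⟩ ⟨q, hq⟩ ↔
    (G.deleteEdges {s(v, x)}).Reachable x q
  rw [induce_deleteEdges]
  exact reachable_induce_iff hxK hq fun y hy => compSet_subset_compSet hG huv hvx hxu hy

section Finite

variable [Fintype V]

lemma compSize_eq_card (G : SimpleGraph V) (u v : V) :
    compSize G u v = Fintype.card (compSet G u v) := by
  rw [compSize, ← Nat.card_eq_fintype_card]
  rfl

lemma EnumeratesNeighbors.sum_compSize_add_one (hG : G.IsTree) {k : ℕ} {c : Fin k → V}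
    (hc : EnumeratesNeighbors G r c) : ∑ i, compSize G r (c i) + 1 = Fintype.card V := by
  have huniv :
      (univ : Finset V) = insert r (univ.biUnion fun i => (compSet G r (c i)).toFinset) := by
    ext x
    by_cases hx : x = r
    · simp [hx]
    · obtain ⟨i, hi⟩ := hc.exists_mem_compSet hG hx
      simpa [hx] using ⟨i, hi⟩
  rw [← card_univ, huniv, card_insert_of_notMem, card_biUnion]
  · simp [compSize_eq_card]
  · intro i _ j _ hij
    simpa [Set.disjoint_toFinset] using
      disjoint_compSet hG (hc.adj i) (hc.adj j) (hc.injective.ne hij)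
  · simp [notMem_compSet hG (hc.adj _)]

lemma compSize_induce_compSet (hG : G.IsTree) (huv : G.Adj u v) (hvx : G.Adj v x)
    (hxu : x ≠ u) (hxK : x ∈ compSet G u v) :
    compSize (G.induce (compSet G u v)) ⟨v, mem_compSet_self G u v⟩ ⟨x, hxK⟩
      = compSize G v x := by
  rw [compSize_eq_card, compSize_eq_card, compSet_induce_compSet hG huv hvx hxu hxK]
  exact Fintype.card_congr (Equiv.subtypeSubtypeEquivSubtype
    fun h => compSet_subset_compSet hG huv hvx hxu h)

lemma cost_eq_sum (G : SimpleGraph V) (π : V ≃ Fin (Fintype.card V)) :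
    cost G π = ∑ e ∈ G.edgeFinset, edgeLen π e := by
  rw [cost, ← coe_edgeFinset, finsum_mem_coe_finset]

lemma edgeLen_le (π : V ≃ Fin (Fintype.card V)) (e : Sym2 V) : edgeLen π e ≤ Fintype.card V := by
  induction e using Sym2.ind with
  | _ a b =>
    have := (π a).isLt
    have := (π b).isLt
    simp only [edgeLen, Sym2.lift_mk]
    omega

lemma bddAbove_projective_costs (G : SimpleGraph V) (r : V) :
    BddAbove {c | ∃ π : V ≃ Fin (Fintype.card V), Projective G r π ∧ cost G π = c} := by
  refine ⟨#G.edgeFinset * Fintype.card V, ?_⟩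
  rintro _ ⟨π, -, rfl⟩
  rw [cost_eq_sum]
  simpa using sum_le_card_nsmul G.edgeFinset (edgeLen π) _ fun e _ => edgeLen_le π e

lemma cost_le_maxProj {π : V ≃ Fin (Fintype.card V)} (hπ : Projective G r π) :
    cost G π ≤ maxProj G r :=
  le_csSup (bddAbove_projective_costs G r) ⟨π, hπ, rfl⟩

lemma maxProj_le_of_iso {W : Type} [Fintype W] {H : SimpleGraph W} (e : G ≃g H) (r : V) :
    maxProj G r ≤ maxProj H (e r) := by
  refine csSup_le' ?_
  rintro _ ⟨π, hπ, rfl⟩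
  let π' : W ≃ Fin (Fintype.card W) :=
    e.symm.toEquiv.trans (π.trans (finCongr (Fintype.card_congr e.toEquiv)))
  have hadj {a b : W} (h : H.Adj a b) : G.Adj (e.symm a) (e.symm b) := e.symm.map_adj_iff.mpr h
  have hproj : Projective H (e r) π' := by
    refine ⟨fun s t a b h1 h2 => hπ.1 (hadj h1) (hadj h2), fun a b hab => ?_⟩
    have := hπ.2 (hadj hab)
    rwa [← e.symm_apply_apply r] at this
  have hcost : cost H π' = cost G π := by
    rw [cost_eq_sum, cost_eq_sum]
    refine sum_nbij' (Sym2.map e.symm) (Sym2.map e) ?_ ?_ ?_ ?_ ?_ <;> intro f <;>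
      induction f using Sym2.ind <;> simp [edgeLen, π', e.map_adj_iff, e.symm.map_adj_iff]
  exact hcost ▸ cost_le_maxProj hproj

lemma maxProj_congr_iso {W : Type} [Fintype W] {H : SimpleGraph W} (e : G ≃g H) (r : V) :
    maxProj G r = maxProj H (e r) :=
  le_antisymm (maxProj_le_of_iso e r) (by simpa using maxProj_le_of_iso e.symm (e r))

noncomputable def maxProjComp (G : SimpleGraph V) (r x : V) : ℕ :=
  maxProj (G.induce (compSet G r x)) ⟨x, mem_compSet_self G r x⟩

lemma maxProjComp_induce_compSet (hG : G.IsTree) (huv : G.Adj u v) (hvx : G.Adj v x)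
    (hxu : x ≠ u) (hxK : x ∈ compSet G u v) :
    maxProjComp (G.induce (compSet G u v)) ⟨v, mem_compSet_self G u v⟩ ⟨x, hxK⟩
      = maxProjComp G v x := by
  have hK := compSet_induce_compSet hG huv hvx hxu hxK
  have hsub := compSet_subset_compSet hG huv hvx hxu
  let φ : (G.induce (compSet G u v)).induce
      (compSet (G.induce (compSet G u v)) ⟨v, mem_compSet_self G u v⟩ ⟨x, hxK⟩)
      ≃g G.induce (compSet G v x) :=
    ⟨⟨fun a => ⟨a.1.1, (Set.ext_iff.mp hK _).mp a.2⟩,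
      fun b => ⟨⟨b.1, hsub b.2⟩, (Set.ext_iff.mp hK _).mpr b.2⟩, fun _ => rfl, fun _ => rfl⟩,
      Iff.rfl⟩
  exact maxProj_congr_iso φ _

noncomputable def edgesWithin (G : SimpleGraph V) (S : Set V) : Finset (Sym2 V) :=
  {e ∈ G.edgeFinset | ∀ x ∈ e, x ∈ S}

lemma cost_induce_eq_sum {S : Set V} (π : V ≃ Fin (Fintype.card V))
    (σ : S ≃ Fin (Fintype.card S))
    (hdist : ∀ a b : S, ((σ a : ℤ) - σ b).natAbs = ((π a : ℤ) - π b).natAbs) :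
    cost (G.induce S) σ = ∑ e ∈ edgesWithin G S, edgeLen π e := by
  rw [cost_eq_sum]
  refine sum_bij (fun f _ => Sym2.map Subtype.val f) ?_
    (fun _ _ _ _ h => Sym2.map.injective Subtype.val_injective h) ?_ ?_
  · intro f hf
    induction f using Sym2.ind with
    | _ a b =>
      have hab : G.Adj a b := mem_edgeFinset.mp hf
      simp [edgesWithin, hab]
  · intro f hf
    induction f using Sym2.ind with
    | _ a b =>
      simp only [edgesWithin, mem_filter, mem_edgeFinset, Sym2.mem_iff, forall_eq_or_imp,
        forall_eq] at hf
      exact ⟨s((⟨a, hf.2.1⟩ : S), ⟨b, hf.2.2⟩), mem_edgeFinset.mpr hf.1, rfl⟩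
  · intro f _
    induction f using Sym2.ind with
    | _ a b => exact hdist a b

namespace EnumeratesNeighbors

variable {k : ℕ} {c : Fin k → V}

lemma filter_notMem_edgeFinset (hG : G.IsTree) (hc : EnumeratesNeighbors G r c) :
    {e ∈ G.edgeFinset | r ∉ e} = univ.biUnion fun i => edgesWithin G (compSet G r (c i)) := by
  ext e
  induction e using Sym2.ind with
  | _ a b =>
    simp only [edgesWithin, mem_filter, mem_edgeFinset, mem_edgeSet, Sym2.mem_iff,
      forall_eq_or_imp, forall_eq, mem_biUnion, mem_univ, true_and, not_or]
    constructor
    · rintro ⟨hab, hra, hrb⟩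
      obtain ⟨i, hai⟩ := hc.exists_mem_compSet hG (Ne.symm hra)
      exact ⟨i, hab, hai, mem_compSet_of_adj hai (Ne.symm hra) hab (Ne.symm hrb)⟩
    · rintro ⟨i, hab, hai, hbi⟩
      have hr := notMem_compSet hG (hc.adj i)
      exact ⟨hab, fun h => hr (h ▸ hai), fun h => hr (h ▸ hbi)⟩

lemma cost_eq (hG : G.IsTree) (hc : EnumeratesNeighbors G r c) (π : V ≃ Fin (Fintype.card V)) :
    cost G π = ∑ i, ∑ e ∈ edgesWithin G (compSet G r (c i)), edgeLen π e
      + ∑ i, edgeLen π s(r, c i) := by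
  rw [cost_eq_sum, ← sum_filter_not_add_sum_filter G.edgeFinset (r ∈ ·),
    hc.filter_notMem_edgeFinset hG, sum_biUnion]
  · congr 1
    refine (sum_nbij (fun i => s(r, c i)) ?_ ?_ ?_ fun _ _ => rfl).symm
    · simpa using hc.adj
    · intro i _ j _ hij
      exact hc.injective (Sym2.congr_right.mp hij)
    · intro e he
      induction e using Sym2.ind with
      | _ a b =>
        simp only [mem_coe, mem_filter, mem_edgeFinset, mem_edgeSet, Sym2.mem_iff] at he
        obtain ⟨hab, rfl | rfl⟩ := he
        · obtain ⟨i, rfl⟩ := hc.exists_eq b hab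
          exact ⟨i, mem_coe.mpr (mem_univ i), rfl⟩
        · obtain ⟨i, rfl⟩ := hc.exists_eq a hab.symm
          exact ⟨i, mem_coe.mpr (mem_univ i), Sym2.eq_swap⟩
  · intro i _ j _ hij
    refine disjoint_left.mpr fun e hei hej => ?_
    have hdisj := disjoint_compSet hG (hc.adj i) (hc.adj j) (hc.injective.ne hij)
    simp only [edgesWithin, mem_filter] at hei hej
    exact Set.disjoint_left.mp hdisj (hei.2 _ e.out_fst_mem) (hej.2 _ e.out_fst_mem)

end EnumeratesNeighbors

/-! ### Projective arrangements -/

lemma Planar.false_of_crossing {π : V ≃ Fin (Fintype.card V)} (hπ : Planar G π) {a b p q : V}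
    (hab : G.Adj a b) (hpq : G.Adj p q) (hap : (π a : ℕ) < π p) (hpb : (π p : ℕ) < π b)
    (hq : (π q : ℕ) < π a ∨ (π b : ℕ) < π q) : False := by
  rcases hq with hq | hq
  · exact hπ hpq.symm hab (by omega : (π q : ℕ) < π p) (by omega : (π a : ℕ) < π b) hq ⟨hap, hpb⟩
  · exact hπ hab hpq (by omega : (π a : ℕ) < π b) (by omega : (π p : ℕ) < π q) hap ⟨hpb, hq⟩

lemma Walk.exists_mem_support_or_mem_edges_across {H : SimpleGraph V}
    (π : V ≃ Fin (Fintype.card V)) {x y : V} (W : H.Walk x y) (t : ℕ) (hx : (π x : ℕ) ≤ t)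
    (hy : t ≤ (π y : ℕ)) :
    (∃ z ∈ W.support, (π z : ℕ) = t) ∨
      ∃ a b, s(a, b) ∈ W.edges ∧ (π a : ℕ) < t ∧ t < (π b : ℕ) := by
  induction W with
  | nil => exact Or.inl ⟨_, by simp, le_antisymm hx hy⟩
  | @cons x x' y h W ih =>
    rcases hx.eq_or_lt with hx | hx
    · exact Or.inl ⟨x, by simp, hx⟩
    by_cases hx' : t ≤ (π x' : ℕ)
    · rcases hx'.eq_or_lt with hx' | hx'
      · exact Or.inl ⟨x', by simp, hx'.symm⟩
      · exact Or.inr ⟨x, x', by simp, hx, hx'⟩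
    · rcases ih (le_of_not_ge hx') hy with ⟨z, hz, hzt⟩ | ⟨a, b, he, hab⟩
      · exact Or.inl ⟨z, by simp [hz], hzt⟩
      · exact Or.inr ⟨a, b, by simp [he], hab⟩

lemma Walk.exists_mem_edges_leaving {H : SimpleGraph V} (π : V ≃ Fin (Fintype.card V))
    {x y : V} (W : H.Walk x y) (α β : ℕ) (hx : α < (π x : ℕ) ∧ (π x : ℕ) < β)
    (hy : ¬(α < (π y : ℕ) ∧ (π y : ℕ) < β))
    (hW : ∀ z ∈ W.support, (π z : ℕ) ≠ α ∧ (π z : ℕ) ≠ β) :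
    ∃ a b, s(a, b) ∈ W.edges ∧ (α < (π a : ℕ) ∧ (π a : ℕ) < β) ∧
      ((π b : ℕ) < α ∨ β < (π b : ℕ)) := by
  induction W with
  | nil => exact absurd hx hy
  | @cons x x' y h W ih =>
    by_cases hx' : α < (π x' : ℕ) ∧ (π x' : ℕ) < β
    · obtain ⟨a, b, he, hab⟩ := ih hx' hy fun z hz => hW z (by simp [hz])
      exact ⟨a, b, by simp [he], hab⟩
    · have := hW x' (by simp)
      exact ⟨x, x', by simp, hx, by omega⟩

def IsContiguous (π : V ≃ Fin (Fintype.card V)) (S : Set V) : Prop :=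
  ∀ ⦃x z y : V⦄, x ∈ S → z ∈ S → (π x : ℕ) < π y → (π y : ℕ) < π z → y ∈ S

variable {π : V ≃ Fin (Fintype.card V)}

/-- A vertex `y` outside the component strictly between two of its vertices is either the root,
covered by a component edge, or joined to the root by a path avoiding the component, one of whose
edges must cross a component edge. -/
lemma isContiguous_compSet (hG : G.IsTree) (hπ : Projective G r π) (hrw : G.Adj r w) :
    IsContiguous π (compSet G r w) := by
  intro x z y hx hz hxy hyz
  by_contra hy
  obtain ⟨W1⟩ := id hx
  obtain ⟨W2⟩ := id hz
  let W := W1.reverse.append W2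
  have hW : ∀ a ∈ W.support, a ∈ compSet G r w := fun a ha => mem_compSet_of_mem_support hx W ha
  have hadj {a b : V} (h : (G.deleteEdges {s(r, w)}).Adj a b) : G.Adj a b :=
    ((deleteEdges_adj ..).mp h).1
  obtain ⟨y', hy', hy't⟩ | ⟨a, b, he, hay, hyb⟩ :=
    Walk.exists_mem_support_or_mem_edges_across π W (π y) hxy.le hyz.le
  · exact hy (π.injective (Fin.ext hy't) ▸ hW y' hy')
  have haK := hW a (W.fst_mem_support_of_mem_edges he)
  have hbK := hW b (W.snd_mem_support_of_mem_edges he)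
  have hab := hadj (W.adj_of_mem_edges he)
  by_cases hyr : y = r
  · subst hyr
    exact hπ.2 hab ⟨hay, hyb⟩
  have hry := reachable_deleteEdges_of_notMem_compSet hG hrw hy
  obtain ⟨W3⟩ := hry.symm
  have hW3 : ∀ a' ∈ W3.support, a' ∉ compSet G r w := fun a' ha' ha'K =>
    not_reachable_deleteEdges hG hrw ((hry.trans ⟨W3.takeUntil a' ha'⟩).trans ha'K.symm)
  obtain ⟨p, q, hpq, hp, hq⟩ := Walk.exists_mem_edges_leaving π W3 (π a) (π b) ⟨hay, hyb⟩
    (fun h => hπ.2 hab h) fun a' ha' =>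
      ⟨fun h => hW3 a' ha' (π.injective (Fin.ext h) ▸ haK),
        fun h => hW3 a' ha' (π.injective (Fin.ext h) ▸ hbK)⟩
  exact Planar.false_of_crossing hπ.1 hab (hadj (W3.adj_of_mem_edges hpq)) hp.1 hp.2 hq

lemma not_covers_of_mem_compSet (hG : G.IsTree) (hπ : Projective G r π) (hrw : G.Adj r w)
    {x y : V} (hxy : G.Adj x y) (hx : x ∈ compSet G r w) (hy : y ∈ compSet G r w) :
    ¬((π x : ℕ) < π w ∧ (π w : ℕ) < π y) := by
  rintro ⟨hxw, hwy⟩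
  have hrK := notMem_compSet hG hrw
  have hrx : (π r : ℕ) ≠ π x := fun h => hrK (π.injective (Fin.ext h) ▸ hx)
  have hry : (π r : ℕ) ≠ π y := fun h => hrK (π.injective (Fin.ext h) ▸ hy)
  rcases lt_or_gt_of_ne hrx with hrx | hrx
  · exact Planar.false_of_crossing hπ.1 hxy hrw.symm hxw hwy (Or.inl hrx)
  rcases lt_or_gt_of_ne hry with hry | hry
  · exact hrK (isContiguous_compSet hG hπ hrw hx hy hrx hry)
  · exact Planar.false_of_crossing hπ.1 hxy hrw.symm hxw hwy (Or.inr hry)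

lemma Projective.trans_revPerm (hπ : Projective G r π) :
    Projective G r (π.trans Fin.revPerm) := by
  refine ⟨fun a b a' b' h1 h2 h3 h4 h5 h6 => ?_, fun a b hab h => hπ.2 hab.symm ?_⟩
  · simp only [Equiv.trans_apply, Fin.revPerm_apply, Fin.rev_lt_rev] at h3 h4 h5 h6
    exact hπ.1 h2.symm h1.symm h4 h3 h6.2 ⟨h6.1, h5⟩
  · simp only [Equiv.trans_apply, Fin.revPerm_apply, Fin.rev_lt_rev] at h
    exact h.symm

lemma cost_trans_revPerm (π : V ≃ Fin (Fintype.card V)) :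
    cost G (π.trans Fin.revPerm) = cost G π := by
  rw [cost_eq_sum, cost_eq_sum]
  refine sum_congr rfl fun e _ => ?_
  induction e using Sym2.ind with
  | _ a b =>
    have := (π a).isLt
    have := (π b).isLt
    simp only [edgeLen, Sym2.lift_mk, Equiv.trans_apply, Fin.revPerm_apply, Fin.val_rev]
    omega

lemma IsContiguous.sub_lt_card {S : Set V} (hS : IsContiguous π S) {a b : V} (ha : a ∈ S)
    (hb : b ∈ S) : (π a : ℕ) - π b < Fintype.card S := by
  have hsub : Icc (π b) (π a) ⊆ S.toFinset.map π.toEmbedding := by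
    intro t ht
    rw [mem_Icc] at ht
    refine mem_map_equiv.mpr (Set.mem_toFinset.mpr ?_)
    rcases ht.1.eq_or_lt with h | h
    · simpa [← h] using hb
    rcases ht.2.eq_or_lt with h' | h'
    · simpa [h'] using ha
    exact hS hb ha (by rw [Equiv.apply_symm_apply]; exact h)
      (by rw [Equiv.apply_symm_apply]; exact h')
  have := card_le_card hsub
  rw [card_map, Set.toFinset_card, Fin.card_Icc] at this
  have : 0 < Fintype.card S := Fintype.card_pos_iff.mpr ⟨⟨a, ha⟩⟩
  omega

lemma IsContiguous.exists_equiv {S : Set V} (hS : IsContiguous π S) :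
    ∃ (m : ℕ) (σ : S ≃ Fin (Fintype.card S)), ∀ a : S, (σ a : ℕ) + m = π a := by
  rcases isEmpty_or_nonempty S with hE | hne
  · exact ⟨0, Fintype.equivFin S, fun a => isEmptyElim a⟩
  obtain ⟨b, -, hb⟩ := exists_min_image univ (fun a : S => (π a : ℕ)) univ_nonempty
  refine ⟨π b, Equiv.ofBijective (fun a => ⟨π a - π b, hS.sub_lt_card a.2 b.2⟩) ?_, fun a => ?_⟩
  · refine (Fintype.bijective_iff_injective_and_card _).mpr ⟨fun a a' h => ?_, by simp⟩
    have := hb a (mem_univ _)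
    have := hb a' (mem_univ _)
    have h' : (π a : ℕ) - π b = π a' - π b := Fin.mk.inj_iff.mp h
    exact Subtype.ext (π.injective (Fin.ext (by omega)))
  · have := hb a (mem_univ _)
    simp only [Equiv.ofBijective_apply]
    omega

/-! ### The upper bound -/

lemma sum_edgesWithin_le_maxProjComp (hG : G.IsTree) (hπ : Projective G r π) (hrw : G.Adj r w) :
    ∑ e ∈ edgesWithin G (compSet G r w), edgeLen π e ≤ maxProjComp G r w := by
  obtain ⟨m, σ, hσ⟩ := (isContiguous_compSet hG hπ hrw).exists_equiv
  have hlt {a b : compSet G r w} : σ a < σ b ↔ π a < π b := by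
    rw [Fin.lt_def, Fin.lt_def]
    have := hσ a
    have := hσ b
    omega
  rw [← cost_induce_eq_sum π σ fun a b => by have := hσ a; have := hσ b; omega]
  refine cost_le_maxProj ⟨fun a b a' b' h1 h2 h3 h4 h5 h6 => ?_, fun a b hab h => ?_⟩
  · simp only [hlt] at h3 h4 h5 h6
    exact hπ.1 h1 h2 h3 h4 h5 h6
  · simp only [hlt] at h
    exact not_covers_of_mem_compSet hG hπ hrw hab a.2 b.2 h

def StrictlyBetween (π : V ≃ Fin (Fintype.card V)) (a b x : V) : Prop :=
  ((π a : ℕ) < π x ∧ (π x : ℕ) < π b) ∨ ((π b : ℕ) < π x ∧ (π x : ℕ) < π a)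

lemma edgeLen_eq_card_strictlyBetween_add_one (π : V ≃ Fin (Fintype.card V)) {a b : V}
    (hab : a ≠ b) : edgeLen π s(a, b) = #{x | StrictlyBetween π a b x} + 1 := by
  have hne : (π a : ℕ) ≠ π b := fun h => hab (π.injective (Fin.ext h))
  have hcard : #{x | StrictlyBetween π a b x} =
      #(Ioo (min (π a : ℕ) (π b)) (max (π a : ℕ) (π b))) := by
    refine card_bij (fun x _ => (π x : ℕ)) (fun x hx => ?_)
      (fun x _ y _ h => π.injective (Fin.ext h)) fun t ht => ?_
    · rw [mem_filter_univ] at hx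
      simp only [StrictlyBetween] at hx
      simp only [mem_Ioo]
      omega
    · simp only [mem_Ioo] at ht
      have htV : t < Fintype.card V := by have := (π a).isLt; have := (π b).isLt; omega
      refine ⟨π.symm ⟨t, htV⟩, ?_, by simp⟩
      rw [mem_filter_univ]
      simp only [StrictlyBetween, Equiv.apply_symm_apply]
      omega
  simp only [edgeLen, Sym2.lift_mk, hcard, Nat.card_Ioo]
  omega

/-- The component containing the vertex farthest from the root lies below no other root edge. -/
lemma exists_not_forall_strictlyBetween {k : ℕ} (c : Fin k → V) (B : Finset (Fin k))
    (hB : B.Nonempty) :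
    ∃ j ∈ B, ∀ i ∈ B, i ≠ j → ¬(j = i ∨ ∀ x ∈ compSet G r (c j), StrictlyBetween π r (c i) x) := by
  let U := B.biUnion fun j => (compSet G r (c j)).toFinset
  have hmemU {i : Fin k} (hi : i ∈ B) : c i ∈ U :=
    mem_biUnion.mpr ⟨i, hi, Set.mem_toFinset.mpr (mem_compSet_self G r (c i))⟩
  have hU : U.Nonempty := let ⟨i, hi⟩ := hB; ⟨c i, hmemU hi⟩
  obtain ⟨x, hxU, hxmax⟩ := exists_max_image U (fun x => ((π x : ℕ) - π r) + ((π r : ℕ) - π x)) hU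
  obtain ⟨j, hjB, hxj⟩ := mem_biUnion.mp hxU
  refine ⟨j, hjB, fun i hiB hij h => ?_⟩
  rcases h with h | h
  · exact hij h.symm
  have hbtw := h x (Set.mem_toFinset.mp hxj)
  have := hxmax (c i) (hmemU hiB)
  simp only [StrictlyBetween] at hbtw
  omega

namespace EnumeratesNeighbors

variable {k : ℕ} {c : Fin k → V}

/-- A vertex of the component of `c j` outside the span of the edge `r c_i` would, by
contiguity, put `r` or `c i` into that component. -/
lemma forall_strictlyBetween_of_mem (hG : G.IsTree) (hc : EnumeratesNeighbors G r c)
    (hπ : Projective G r π) {i j : Fin k} (hji : j ≠ i) {x : V}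
    (hx : StrictlyBetween π r (c i) x) (hxj : x ∈ compSet G r (c j)) :
    ∀ x' ∈ compSet G r (c j), StrictlyBetween π r (c i) x' := by
  intro x' hx'
  by_contra hx'n
  have hrj := notMem_compSet hG (hc.adj j)
  have hij : c i ∉ compSet G r (c j) := fun h => Set.disjoint_left.mp
    (disjoint_compSet hG (hc.adj j) (hc.adj i) (hc.injective.ne hji)) h (mem_compSet_self _ _ _)
  have hx'r : (π x' : ℕ) ≠ π r := fun h => hrj (π.injective (Fin.ext h) ▸ hx')
  have hx'c : (π x' : ℕ) ≠ π (c i) := fun h => hij (π.injective (Fin.ext h) ▸ hx')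
  have hconv := isContiguous_compSet hG hπ (hc.adj j)
  simp only [StrictlyBetween] at hx hx'n
  have hcross : ((π x' : ℕ) < π r ∧ (π r : ℕ) < π x ∨ (π x : ℕ) < π r ∧ (π r : ℕ) < π x') ∨
      ((π x' : ℕ) < π (c i) ∧ (π (c i) : ℕ) < π x ∨
        (π x : ℕ) < π (c i) ∧ (π (c i) : ℕ) < π x') := by
    omega
  rcases hcross with (⟨h1, h2⟩ | ⟨h1, h2⟩) | (⟨h1, h2⟩ | ⟨h1, h2⟩)
  · exact hrj (hconv hx' hxj h1 h2)
  · exact hrj (hconv hxj hx' h1 h2)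
  · exact hij (hconv hx' hxj h1 h2)
  · exact hij (hconv hxj hx' h1 h2)

lemma edgeLen_le_sum_compSize (hG : G.IsTree) (hc : EnumeratesNeighbors G r c)
    (hπ : Projective G r π) (i : Fin k) :
    edgeLen π s(r, c i) ≤ ∑ j ∈ {j | j = i ∨ ∀ x ∈ compSet G r (c j), StrictlyBetween π r (c i) x},
      compSize G r (c j) := by
  set T : Finset (Fin k) := {j | j = i ∨ ∀ x ∈ compSet G r (c j), StrictlyBetween π r (c i) x}
  set B : Finset V := {x | StrictlyBetween π r (c i) x}
  have hsub : insert (c i) B ⊆ T.biUnion fun j => (compSet G r (c j)).toFinset := by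
    refine insert_subset (mem_biUnion.mpr ⟨i, by simp [T], by simp [mem_compSet_self]⟩)
      fun x hx => ?_
    rw [mem_filter_univ] at hx
    have hxr : x ≠ r := by
      rintro rfl
      simp only [StrictlyBetween] at hx
      omega
    obtain ⟨j, hxj⟩ := hc.exists_mem_compSet hG hxr
    refine mem_biUnion.mpr ⟨j, ?_, Set.mem_toFinset.mpr hxj⟩
    rw [mem_filter_univ]
    by_cases hji : j = i
    · exact Or.inl hji
    · exact Or.inr (hc.forall_strictlyBetween_of_mem hG hπ hji hx hxj)
  have hci : c i ∉ B := by simp [B, StrictlyBetween]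
  calc edgeLen π s(r, c i) = #(insert (c i) B) := by
        rw [card_insert_of_notMem hci, edgeLen_eq_card_strictlyBetween_add_one π (hc.adj i).ne]
    _ ≤ ∑ j ∈ T, #(compSet G r (c j)).toFinset := (card_le_card hsub).trans card_biUnion_le
    _ = ∑ j ∈ T, compSize G r (c j) := by simp [compSize_eq_card]

lemma sum_edgeLen_le_rankWeightedSum (hG : G.IsTree) (hc : EnumeratesNeighbors G r c)
    (hs : Antitone fun i => compSize G r (c i)) (hπ : Projective G r π) :
    ∑ i, edgeLen π s(r, c i) ≤ rankWeightedSum fun i => compSize G r (c i) :=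
  (sum_le_sum fun i _ => hc.edgeLen_le_sum_compSize hG hπ i).trans <|
    sum_sum_le_rankWeightedSum hs _ fun B hB => by
      simpa only [mem_filter_univ] using exists_not_forall_strictlyBetween c B hB

lemma cost_le (hG : G.IsTree) (hc : EnumeratesNeighbors G r c)
    (hs : Antitone fun i => compSize G r (c i)) (hπ : Projective G r π) :
    cost G π ≤ ∑ i, maxProjComp G r (c i) + rankWeightedSum fun i => compSize G r (c i) := by
  rw [hc.cost_eq hG π]
  exact add_le_add (sum_le_sum fun i _ => sum_edgesWithin_le_maxProjComp hG hπ (hc.adj i))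
    (hc.sum_edgeLen_le_rankWeightedSum hG hs hπ)

lemma maxProj_le (hG : G.IsTree) (hc : EnumeratesNeighbors G r c)
    (hs : Antitone fun i => compSize G r (c i)) :
    maxProj G r ≤ ∑ i, maxProjComp G r (c i) + rankWeightedSum fun i => compSize G r (c i) :=
  csSup_le' fun _ ⟨_, hπ, h⟩ => h ▸ hc.cost_le hG hs hπ

end EnumeratesNeighbors

/-! ### Concatenation and the recurrence -/

section Concatenation

variable {k : ℕ} {c : Fin k → V}

variable (σ : ∀ i, compSet G r (c i) ≃ Fin (Fintype.card (compSet G r (c i))))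

/-- `f` places the root first and then the components one after the other, each arranged
by `σ`. -/
def IsConcatenation (f : V → ℕ) : Prop :=
  f r = 0 ∧ ∀ i x (hx : x ∈ compSet G r (c i)),
    f x = 1 + prefixSum (fun i => compSize G r (c i)) i + σ i ⟨x, hx⟩

lemma EnumeratesNeighbors.exists_isConcatenation (hG : G.IsTree)
    (hc : EnumeratesNeighbors G r c) : ∃ f, IsConcatenation σ f := by
  have hblk (x : V) (hx : x ≠ r) := hc.exists_mem_compSet hG hx
  refine ⟨fun x => if hx : x = r then 0 else 1 + prefixSum (fun i => compSize G r (c i))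
    (hblk x hx).choose + σ _ ⟨x, (hblk x hx).choose_spec⟩, dif_pos rfl, fun i x hx => ?_⟩
  have hxr : x ≠ r := fun h => notMem_compSet hG (hc.adj i) (h ▸ hx)
  have hi : (hblk x hxr).choose = i := hc.eq_of_mem_compSet hG (hblk x hxr).choose_spec hx
  simp only [dif_neg hxr]
  subst hi
  rfl

variable {σ} {f : V → ℕ}

lemma IsConcatenation.mem_block (hf : IsConcatenation σ f) {i : Fin k} {x : V}
    (hx : x ∈ compSet G r (c i)) :
    1 + prefixSum (fun i => compSize G r (c i)) i ≤ f x ∧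
      f x < 1 + prefixSum (fun i => compSize G r (c i)) (i + 1) := by
  have := (σ i ⟨x, hx⟩).isLt
  have := compSize_eq_card G r (c i)
  rw [hf.2 i x hx, prefixSum_succ]
  omega

lemma IsConcatenation.lt_of_lt (hf : IsConcatenation σ f) {i j : Fin k} (hij : i < j) {x y : V}
    (hx : x ∈ compSet G r (c i)) (hy : y ∈ compSet G r (c j)) : f x < f y := by
  have := hf.mem_block hx
  have := hf.mem_block hy
  have := prefixSum_mono (fun i => compSize G r (c i)) (show (i : ℕ) + 1 ≤ j from hij)
  omega

lemma IsConcatenation.lt_card (hG : G.IsTree) (hc : EnumeratesNeighbors G r c)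
    (hf : IsConcatenation σ f) (x : V) : f x < Fintype.card V := by
  rw [← hc.sum_compSize_add_one hG]
  by_cases hx : x = r
  · rw [hx, hf.1]
    omega
  obtain ⟨i, hxi⟩ := hc.exists_mem_compSet hG hx
  have := (hf.mem_block hxi).2
  have := prefixSum_le_sum (fun i => compSize G r (c i)) (i + 1)
  omega

lemma IsConcatenation.injective (hG : G.IsTree) (hc : EnumeratesNeighbors G r c)
    (hf : IsConcatenation σ f) : Function.Injective f := by
  have hpos {x : V} (hx : x ≠ r) : 0 < f x := by
    obtain ⟨i, hxi⟩ := hc.exists_mem_compSet hG hx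
    have := (hf.mem_block hxi).1
    omega
  intro x y hxy
  by_cases hx : x = r <;> by_cases hy : y = r
  · rw [hx, hy]
  · have := hpos hy
    rw [hx, hf.1] at hxy
    omega
  · have := hpos hx
    rw [hy, hf.1] at hxy
    omega
  obtain ⟨i, hxi⟩ := hc.exists_mem_compSet hG hx
  obtain ⟨j, hyj⟩ := hc.exists_mem_compSet hG hy
  rcases lt_trichotomy i j with hij | rfl | hij
  · exact absurd hxy (hf.lt_of_lt hij hxi hyj).ne
  · rw [hf.2 i x hxi, hf.2 i y hyj] at hxy
    have : σ i ⟨x, hxi⟩ = σ i ⟨y, hyj⟩ := Fin.ext (by omega)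
    exact congrArg Subtype.val ((σ i).injective this)
  · exact absurd hxy (hf.lt_of_lt hij hyj hxi).ne'

variable (σ) in
lemma EnumeratesNeighbors.exists_equiv_isConcatenation (hG : G.IsTree)
    (hc : EnumeratesNeighbors G r c) :
    ∃ π : V ≃ Fin (Fintype.card V), IsConcatenation σ fun x => (π x : ℕ) := by
  obtain ⟨f, hf⟩ := hc.exists_isConcatenation σ hG
  exact ⟨Equiv.ofBijective (fun x => ⟨f x, hf.lt_card hG hc x⟩)
    ((Fintype.bijective_iff_injective_and_card _).mpr
      ⟨fun x y h => hf.injective hG hc (congrArg Fin.val h), by simp⟩), hf⟩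

lemma IsConcatenation.projective (hG : G.IsTree) (hc : EnumeratesNeighbors G r c)
    (hσ : ∀ i, Projective (G.induce (compSet G r (c i))) ⟨c i, mem_compSet_self G r (c i)⟩ (σ i))
    (hlast : ∀ i,
      (σ i ⟨c i, mem_compSet_self G r (c i)⟩ : ℕ) + 1 = Fintype.card (compSet G r (c i)))
    {π : V ≃ Fin (Fintype.card V)} (hπ : IsConcatenation σ fun x => (π x : ℕ)) :
    Projective G r π := by
  have hr : (π r : ℕ) = 0 := hπ.1
  have hpos (i : Fin k) (x : V) (hx : x ∈ compSet G r (c i)) :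
      (π x : ℕ) = 1 + prefixSum (fun i => compSize G r (c i)) i + σ i ⟨x, hx⟩ := hπ.2 i x hx
  have hord {i j : Fin k} (hij : i < j) {x y : V} (hx : x ∈ compSet G r (c i))
      (hy : y ∈ compSet G r (c j)) : (π x : ℕ) < π y := hπ.lt_of_lt hij hx hy
  have hci (i : Fin k) : c i ∈ compSet G r (c i) := mem_compSet_self G r (c i)
  have hcases {a b : V} (hab : G.Adj a b) (hlt : π a < π b) :=
    hc.adj_cases hG hab fun h => by rw [Fin.lt_def, h, hr] at hlt; omega
  refine ⟨fun a b a' b' h1 h2 h3 h4 h5 h6 => ?_, fun a b _ h => by rw [Fin.lt_def, hr] at h; omega⟩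
  obtain ⟨h6, h7⟩ := h6
  rw [Fin.lt_def] at h3 h4 h5 h6 h7
  rcases hcases h1 h3 with ⟨ha, i, rfl⟩ | ⟨i, hai, hbi⟩ <;>
    rcases hcases h2 h4 with ⟨ha', j, rfl⟩ | ⟨j, ha'j, hb'j⟩
  · subst a a'
    omega
  · subst a
    rcases lt_trichotomy i j with hij | rfl | hij
    · have := hord hij (hci i) ha'j
      omega
    · have := hpos i b' hb'j
      have := hpos i (c i) (hci i)
      have := (σ i ⟨b', hb'j⟩).isLt
      have := hlast i
      omega
    · have := hord hij hb'j (hci i)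
      omega
  · subst a'
    omega
  · rcases lt_trichotomy i j with hij | rfl | hij
    · have := hord hij hbi ha'j
      omega
    · have key {x y : V} (hx : x ∈ compSet G r (c i)) (hy : y ∈ compSet G r (c i))
          (h : (π x : ℕ) < π y) : σ i ⟨x, hx⟩ < σ i ⟨y, hy⟩ := by
        rw [hpos i x hx, hpos i y hy] at h
        rw [Fin.lt_def]
        omega
      exact (hσ i).1 (s := ⟨a, hai⟩) (t := ⟨b, hbi⟩) (u := ⟨a', ha'j⟩) (v := ⟨b', hb'j⟩) h1 h2
        (key hai hbi h3) (key ha'j hb'j h4) (key hai ha'j h5) ⟨key ha'j hbi h6, key hbi hb'j h7⟩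
    · have := hord hij ha'j hai
      omega

lemma IsConcatenation.cost_eq (hG : G.IsTree) (hc : EnumeratesNeighbors G r c)
    (hlast : ∀ i,
      (σ i ⟨c i, mem_compSet_self G r (c i)⟩ : ℕ) + 1 = Fintype.card (compSet G r (c i)))
    {π : V ≃ Fin (Fintype.card V)} (hπ : IsConcatenation σ fun x => (π x : ℕ)) :
    cost G π = ∑ i, cost (G.induce (compSet G r (c i))) (σ i)
      + rankWeightedSum fun i => compSize G r (c i) := by
  have hr : (π r : ℕ) = 0 := hπ.1
  have hpos (i : Fin k) (x : V) (hx : x ∈ compSet G r (c i)) :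
      (π x : ℕ) = 1 + prefixSum (fun i => compSize G r (c i)) i + σ i ⟨x, hx⟩ := hπ.2 i x hx
  rw [hc.cost_eq hG π, ← sum_prefixSum_succ]
  congr 1
  · refine sum_congr rfl fun i _ => (cost_induce_eq_sum π (σ i) fun x y => ?_).symm
    rw [hpos i x x.2, hpos i y y.2, Subtype.coe_eta, Subtype.coe_eta]
    omega
  · refine sum_congr rfl fun i _ => ?_
    have := hlast i
    have := compSize_eq_card G r (c i)
    simp only [edgeLen, Sym2.lift_mk, hr, hpos i (c i) (mem_compSet_self G r (c i)), prefixSum_succ]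
    omega

lemma EnumeratesNeighbors.exists_projective_cost_eq (hG : G.IsTree)
    (hc : EnumeratesNeighbors G r c)
    (hopt : ∀ i, ∃ σ : compSet G r (c i) ≃ Fin (Fintype.card (compSet G r (c i))),
      Projective (G.induce (compSet G r (c i))) ⟨c i, mem_compSet_self G r (c i)⟩ σ ∧
      (σ ⟨c i, mem_compSet_self G r (c i)⟩ : ℕ) = 0 ∧
      cost (G.induce (compSet G r (c i))) σ = maxProjComp G r (c i)) :
    ∃ π : V ≃ Fin (Fintype.card V), Projective G r π ∧ (π r : ℕ) = 0 ∧
      cost G π = ∑ i, maxProjComp G r (c i) + rankWeightedSum fun i => compSize G r (c i) := by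
  choose σ hσ hσr hσcost using hopt
  let τ i := (σ i).trans Fin.revPerm
  have hlast (i : Fin k) : (τ i ⟨c i, mem_compSet_self G r (c i)⟩ : ℕ) + 1 =
      Fintype.card (compSet G r (c i)) := by
    have : 0 < Fintype.card (compSet G r (c i)) :=
      Fintype.card_pos_iff.mpr ⟨⟨c i, mem_compSet_self G r (c i)⟩⟩
    simp only [τ, Equiv.trans_apply, Fin.revPerm_apply, Fin.val_rev, hσr]
    omega
  obtain ⟨π, hπ⟩ := hc.exists_equiv_isConcatenation τ hG
  refine ⟨π, hπ.projective hG hc (fun i => Projective.trans_revPerm (hσ i)) hlast, hπ.1, ?_⟩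
  rw [hπ.cost_eq hG hc hlast]
  simp only [τ, cost_trans_revPerm, hσcost]

end Concatenation

lemma exists_enumeratesNeighbors_antitone (G : SimpleGraph V) (r : V) :
    ∃ (k : ℕ) (c : Fin k → V),
      EnumeratesNeighbors G r c ∧ Antitone fun i => compSize G r (c i) := by
  let e := (Fintype.equivFin (G.neighborSet r)).symm
  let f := fun i => OrderDual.toDual (compSize G r (e i))
  let p := Tuple.sort f
  refine ⟨_, fun i => e (p i), ⟨fun i j h => p.injective (e.injective (Subtype.ext h)),
    fun i => (e (p i)).2, fun x hx => ⟨p.symm (e.symm ⟨x, hx⟩), by simp⟩⟩,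
    fun i j hij => Tuple.monotone_sort f hij⟩

lemma card_compSet_lt (hG : G.IsTree) (hrw : G.Adj r w) :
    Fintype.card (compSet G r w) < Fintype.card V :=
  Fintype.card_subtype_lt (notMem_compSet hG hrw)

theorem exists_projective_root_eq_zero_cost_eq_maxProj (hG : G.IsTree) (r : V) :
    ∃ π : V ≃ Fin (Fintype.card V), Projective G r π ∧ (π r : ℕ) = 0 ∧ cost G π = maxProj G r := by
  obtain ⟨N, hN⟩ : ∃ N, Fintype.card V < N := ⟨_, Nat.lt_succ_self _⟩
  induction N generalizing V with
  | zero => omega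
  | succ N ih =>
    obtain ⟨k, c, hc, hs⟩ := exists_enumeratesNeighbors_antitone G r
    obtain ⟨π, hπ, hr, hcost⟩ := hc.exists_projective_cost_eq hG fun i =>
      ih (isTree_induce_compSet hG) _ (by have := card_compSet_lt hG (hc.adj i); omega)
    exact ⟨π, hπ, hr, le_antisymm (cost_le_maxProj hπ) (hcost ▸ hc.maxProj_le hG hs)⟩

theorem EnumeratesNeighbors.maxProj_eq {k : ℕ} {c : Fin k → V} (hG : G.IsTree)
    (hc : EnumeratesNeighbors G r c)
    (hs : Antitone fun i => compSize G r (c i)) :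
    maxProj G r = ∑ i, maxProjComp G r (c i) + rankWeightedSum fun i => compSize G r (c i) := by
  obtain ⟨π, hπ, -, hcost⟩ := hc.exists_projective_cost_eq hG fun i =>
    exists_projective_root_eq_zero_cost_eq_maxProj (isTree_induce_compSet hG) _
  exact le_antisymm (hc.maxProj_le hG hs) (hcost ▸ cost_le_maxProj hπ)

namespace EnumeratesNeighbors

variable {k : ℕ} {c : Fin (k + 1) → V}

lemma compSize_restrict (hG : G.IsTree) (hc : EnumeratesNeighbors G u c) {j : Fin (k + 1)}
    (hj : c j = v) (i : Fin k) :
    compSize (G.induce (compSet G v u)) ⟨u, mem_compSet_self G v u⟩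
      ⟨c (j.succAbove i), hc.mem_compSet_of_ne hj (Fin.succAbove_ne j i)⟩ =
      compSize G u (c (j.succAbove i)) :=
  compSize_induce_compSet hG (hj ▸ (hc.adj j).symm) (hc.adj _)
    (hj ▸ hc.injective.ne (Fin.succAbove_ne j i)) _

lemma maxProjComp_eq (hG : G.IsTree) (hc : EnumeratesNeighbors G u c)
    (hs : Antitone fun i => compSize G u (c i)) {j : Fin (k + 1)} (hj : c j = v) :
    maxProjComp G v u = ∑ i, maxProjComp G u (c (j.succAbove i))
      + rankWeightedSum fun i => compSize G u (c (j.succAbove i)) := by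
  have hs' : Antitone fun i => compSize (G.induce (compSet G v u)) ⟨u, mem_compSet_self G v u⟩
      ⟨c (j.succAbove i), hc.mem_compSet_of_ne hj (Fin.succAbove_ne j i)⟩ := fun a b hab => by
    dsimp only
    rw [compSize_restrict hG hc hj, compSize_restrict hG hc hj]
    exact hs ((Fin.strictMono_succAbove j).monotone hab)
  rw [maxProjComp, (hc.restrict hG hj).maxProj_eq (isTree_induce_compSet hG) hs']
  simp only [compSize_restrict hG hc hj, maxProjComp_induce_compSet hG (hj ▸ (hc.adj j).symm)
    (hc.adj _) (hj ▸ hc.injective.ne (Fin.succAbove_ne j _))]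

end EnumeratesNeighbors

theorem EnumeratesNeighbors.maxProj_eq_add {k : ℕ} {c : Fin k → V} (hG : G.IsTree)
    (hc : EnumeratesNeighbors G u c)
    (hs : Antitone fun i => compSize G u (c i)) {j : Fin k} (hj : c j = v) :
    maxProj G u = maxProjComp G u v + maxProjComp G v u
      + ((k - ((j : ℕ) + 1)) * compSize G u v + ∑ i ∈ Iic j, compSize G u (c i)) := by
  obtain ⟨k, rfl⟩ := Nat.exists_eq_add_one_of_ne_zero (Fin.pos j).ne'
  rw [hc.maxProj_eq hG hs, Fin.sum_univ_succAbove _ j, hc.maxProjComp_eq hG hs hj,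
    rankWeightedSum_eq_succAbove _ j, hj]
  simp only [Function.comp_def]
  ring

end Finite

end Components

end TreeArrangement

open TreeArrangement

theorem maxProj_diff_adjacent_general (n : ℕ) (G : SimpleGraph (Fin n)) (hG : G.IsTree)
    (u v : Fin n)
    (ku kv : ℕ) (cu : Fin ku → Fin n) (cv : Fin kv → Fin n)
    (hcu_inj : Function.Injective cu) (hcv_inj : Function.Injective cv)
    (hcu_adj : ∀ i, G.Adj u (cu i)) (hcv_adj : ∀ i, G.Adj v (cv i))
    (hcu_surj : ∀ x, G.Adj u x → ∃ i, cu i = x)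
    (hcv_surj : ∀ x, G.Adj v x → ∃ i, cv i = x)
    (hcu_mono : ∀ i j : Fin ku, i ≤ j → compSize G u (cu j) ≤ compSize G u (cu i))
    (hcv_mono : ∀ i j : Fin kv, i ≤ j → compSize G v (cv j) ≤ compSize G v (cv i))
    (ju : Fin ku) (hju : cu ju = v) (jv : Fin kv) (hjv : cv jv = u) :
    (maxProj G v : ℤ) - (maxProj G u : ℤ) =
      (((kv - ((jv : ℕ) + 1)) * compSize G v u
          + ∑ i ∈ Finset.Iic jv, compSize G v (cv i) : ℕ) : ℤ)
      - (((ku - ((ju : ℕ) + 1)) * compSize G u v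
          + ∑ i ∈ Finset.Iic ju, compSize G u (cu i) : ℕ) : ℤ) := by
  have hu := EnumeratesNeighbors.maxProj_eq_add hG ⟨hcu_inj, hcu_adj, hcu_surj⟩
    (fun i j h => hcu_mono i j h) hju
  have hv := EnumeratesNeighbors.maxProj_eq_add hG ⟨hcv_inj, hcv_adj, hcv_surj⟩
    (fun i j h => hcv_mono i j h) hjv
  rw [hu, hv]
  push_cast
  ring

/-- Lemma relating the maximum projective costs for two adjacent roots:
`D_max^pr(T^v) − D_max^pr(T^u) = f(v,u) − f(u,v)`, where
`f(u,v) = (deg u − j)·n_u(v) + Σ_{i=1}^{j} s_i(u)` and `j` is the rank of `v`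
among the neighbors of `u` sorted non-increasingly by subtree size.
Here `cu` (resp. `cv`) enumerates the neighbors of `u` (resp. `v`) sorted
non-increasingly by size, and indices are 0-based (`ju` is the 0-based rank). -/
theorem maxProj_diff_adjacent (n : ℕ) (G : SimpleGraph (Fin n)) (hG : G.IsTree)
    (u v : Fin n) (huv : G.Adj u v)
    (ku kv : ℕ) (cu : Fin ku → Fin n) (cv : Fin kv → Fin n)
    (hcu_inj : Function.Injective cu) (hcv_inj : Function.Injective cv)
    (hcu_adj : ∀ i, G.Adj u (cu i)) (hcv_adj : ∀ i, G.Adj v (cv i))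
    (hcu_surj : ∀ x, G.Adj u x → ∃ i, cu i = x)
    (hcv_surj : ∀ x, G.Adj v x → ∃ i, cv i = x)
    (hcu_mono : ∀ i j : Fin ku, i ≤ j → compSize G u (cu j) ≤ compSize G u (cu i))
    (hcv_mono : ∀ i j : Fin kv, i ≤ j → compSize G v (cv j) ≤ compSize G v (cv i))
    (ju : Fin ku) (hju : cu ju = v) (jv : Fin kv) (hjv : cv jv = u) :
    (maxProj G v : ℤ) - (maxProj G u : ℤ) =
      (((kv - ((jv : ℕ) + 1)) * compSize G v u
          + ∑ i ∈ Finset.Iic jv, compSize G v (cv i) : ℕ) : ℤ)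
      - (((ku - ((ju : ℕ) + 1)) * compSize G u v
          + ∑ i ∈ Finset.Iic ju, compSize G u (cu i) : ℕ) : ℤ) :=
  maxProj_diff_adjacent_general n G hG u v ku kv cu cv hcu_inj hcv_inj hcu_adj hcv_adj hcu_surj
    hcv_surj hcu_mono hcv_mono ju hju jv hjv
end

section
/- Every caterpillar tree T on n vertices admits a planar linear arrangement of cost exactly C(n,2); hence D_max^pl(T) = C(n,2), and caterpillars attain the maximum of D_max^pl over all n-vertex trees. -/
open SimpleGraph

attribute [local instance] Classical.propDecidable

/-!
Upper bound: in a planar arrangement the edges span pairwise non-crossing arcs, and splitting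
such a family at its longest arc shows that at most `n - t` of its arcs have length `≥ t`
when `t ≥ 2`; a tree has `n - 1` edges, which covers `t = 1`. Summing over `t` bounds the cost
by `1 + 2 + ⋯ + (n - 1) = C(n, 2)`. Rosa's zigzag arrangement of a caterpillar is planar and its
edge lengths are exactly `1, 2, …, n - 1`.
-/

open Finset

def NonCrossing (A : Set (ℕ × ℕ)) : Prop :=
  ∀ p ∈ A, ∀ q ∈ A, ¬(p.1 < q.1 ∧ q.1 < p.2 ∧ p.2 < q.2)

namespace NonCrossing

variable {A : Set (ℕ × ℕ)}

theorem mono {B : Set (ℕ × ℕ)} (hB : NonCrossing B) (hAB : A ⊆ B) : NonCrossing A :=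
  fun p hp q hq => hB p (hAB hp) q (hAB hq)

theorem left_or_inside_or_right_of_max (hA : NonCrossing A) {a b : ℕ} (hab : (a, b) ∈ A)
    (hmax : ∀ p ∈ A, p.2 - p.1 ≤ b - a) {p : ℕ × ℕ} (hp : p ∈ A) :
    p.2 ≤ a ∨ (a ≤ p.1 ∧ p.2 ≤ b) ∨ b ≤ p.1 := by
  have h₁ := hA _ hab _ hp
  have h₂ := hA _ hp _ hab
  have h₃ := hmax p hp
  simp only at h₁ h₂
  omega

/-- The second bound is the stronger one the induction needs: it applies inside the longest
arc, which is not itself counted there. -/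
theorem card_le {E : Finset (ℕ × ℕ)} (hE : NonCrossing E) {t : ℕ} (ht : 2 ≤ t) {l r : ℕ}
    (hbd : ∀ p ∈ E, l ≤ p.1 ∧ p.1 + t ≤ p.2 ∧ p.2 ≤ r) :
    #E ≤ r + 1 - l - t ∧ ((l, r) ∉ E → #E ≤ r - l - t) := by
  induction E using Finset.strongInduction generalizing l r with
  | H E ih =>
  rcases E.eq_empty_or_nonempty with rfl | hne
  · simp
  obtain ⟨⟨a, b⟩, hab, hmax⟩ := E.exists_max_image (fun p => p.2 - p.1) hne
  set E' := E.erase (a, b)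
  have ih' : ∀ (P : ℕ × ℕ → Prop) [DecidablePred P] (l' r' : ℕ),
      (∀ p ∈ E, P p → l' ≤ p.1 ∧ p.2 ≤ r') → #(E'.filter P) ≤ r' + 1 - l' - t ∧
        ((l', r') ∉ E'.filter P → #(E'.filter P) ≤ r' - l' - t) := fun P _ l' r' hP => by
    refine ih _ ((filter_subset _ _).trans_ssubset (erase_ssubset hab))
      (hE.mono fun p hp => mem_of_mem_erase (mem_filter.1 hp).1) fun p hp => ?_
    obtain ⟨hp, hPp⟩ := mem_filter.1 hp
    have := hbd p (mem_of_mem_erase hp)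
    have := hP p (mem_of_mem_erase hp) hPp
    omega
  have hL := (ih' (·.2 ≤ a) l a fun p hp h => ⟨(hbd p hp).1, h⟩).1
  have hI := (ih' (fun p => a ≤ p.1 ∧ p.2 ≤ b) a b fun _ _ h => h).2
    fun h => ne_of_mem_erase (mem_filter.1 h).1 rfl
  have hR := (ih' (b ≤ ·.1) b r fun p hp h => ⟨h, (hbd p hp).2.2⟩).1
  have hcover : E' ⊆ E'.filter (·.2 ≤ a) ∪ E'.filter (fun p => a ≤ p.1 ∧ p.2 ≤ b) ∪
      E'.filter (b ≤ ·.1) := fun p hp => by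
    have := hE.left_or_inside_or_right_of_max hab hmax (mem_of_mem_erase hp)
    simp only [mem_union, mem_filter]
    tauto
  have hcard := (card_le_card hcover).trans (card_union_le _ _)
  have hcard' := card_union_le (E'.filter (·.2 ≤ a)) (E'.filter fun p => a ≤ p.1 ∧ p.2 ≤ b)
  have hE' : #E' + 1 = #E := card_erase_add_one hab
  obtain ⟨hla, hab_t, hbr⟩ := hbd _ hab
  refine ⟨by omega, fun hlr => ?_⟩
  have : l < a ∨ b < r := by
    by_contra! h
    exact hlr (by rwa [show a = l by omega, show b = r by omega] at hab)
  omega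

theorem union_reflect (hA : NonCrossing A) (m : ℕ) :
    NonCrossing ({p | p.1 = 0 ∧ m ≤ p.2} ∪ (fun p => (m - p.2, m - p.1)) '' A) := by
  rintro p (⟨hp₁, hp₂⟩ | ⟨p, hp, rfl⟩) q (⟨hq₁, hq₂⟩ | ⟨q, hq, rfl⟩)
  · omega
  · simp only; omega
  · simp only; omega
  · have := hA q hq p hp
    simp only
    omega

theorem sum_length_le {A : Finset (ℕ × ℕ)} (hA : NonCrossing A) {n : ℕ}
    (hcard : #A + 1 ≤ n) (hbd : ∀ p ∈ A, p.1 < p.2 ∧ p.2 < n) :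
    ∑ p ∈ A, (p.2 - p.1) ≤ n.choose 2 := by
  have hlayer : ∀ t ∈ range n, #(A.filter fun p => t < p.2 - p.1) ≤ n - 1 - t := by
    intro t _
    rcases Nat.eq_zero_or_pos t with rfl | ht
    · exact (card_filter_le _ _).trans (by omega)
    · have hnc := hA.mono (coe_subset.2 (filter_subset (fun p => t < p.2 - p.1) A))
      have := hnc.card_le (t := t + 1) (by omega) (l := 0) (r := n - 1) fun p hp => by
        have := hbd p (mem_filter.1 hp).1
        have := (mem_filter.1 hp).2
        omega
      omega
  calc ∑ p ∈ A, (p.2 - p.1)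
      = ∑ p ∈ A, ∑ t ∈ range n, if t < p.2 - p.1 then 1 else 0 := by
        refine sum_congr rfl fun p hp => ?_
        have : (range n).filter (· < p.2 - p.1) = range (p.2 - p.1) := by
          ext t
          have := hbd p hp
          simp only [mem_filter, mem_range]
          omega
        rw [sum_boole, Nat.cast_id, this, card_range]
    _ = ∑ t ∈ range n, #(A.filter fun p => t < p.2 - p.1) := by
        rw [sum_comm]
        simp only [card_filter]
    _ ≤ ∑ t ∈ range n, (n - 1 - t) := sum_le_sum hlayer
    _ = n.choose 2 := by
        rw [sum_range_reflect (fun t => t) n, sum_range_id, Nat.choose_two_right]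

end NonCrossing

variable {V : Type*}

def arc (f : V → ℕ) : Sym2 V → ℕ × ℕ :=
  Sym2.lift ⟨fun u v => (min (f u) (f v), max (f u) (f v)), fun _ _ =>
    Prod.ext (min_comm _ _) (max_comm _ _)⟩

@[simp]
theorem arc_mk (f : V → ℕ) (u v : V) : arc f s(u, v) = (min (f u) (f v), max (f u) (f v)) :=
  rfl

theorem arc_mk_of_le {f : V → ℕ} {u v : V} (h : f u ≤ f v) : arc f s(u, v) = (f u, f v) := by
  simp [h]

def arcLen (f : V → ℕ) (e : Sym2 V) : ℕ := (arc f e).2 - (arc f e).1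

theorem arc_injective {f : V → ℕ} (hf : Function.Injective f) : Function.Injective (arc f) := by
  intro e₁ e₂ h
  induction e₁ using Sym2.ind with | _ u₁ v₁ =>
  induction e₂ using Sym2.ind with | _ u₂ v₂ =>
  simp only [arc_mk, Prod.mk.injEq] at h
  rw [Sym2.eq_iff]
  have : f u₁ = f u₂ ∧ f v₁ = f v₂ ∨ f u₁ = f v₂ ∧ f v₁ = f u₂ := by omega
  exact this.imp (And.imp (@hf _ _) (@hf _ _)) (And.imp (@hf _ _) (@hf _ _))

section Reflect

variable {f g : V → ℕ} {m : ℕ} {e : Sym2 V}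

theorem arc_reflect (h : ∀ v ∈ e, f v ≤ m ∧ g v = m - f v) :
    arc g e = (m - (arc f e).2, m - (arc f e).1) := by
  induction e using Sym2.ind with | _ u v =>
  have hu := h u (Sym2.mem_mk_left u v)
  have hv := h v (Sym2.mem_mk_right u v)
  simp only [arc_mk, Prod.mk.injEq]
  omega

theorem arcLen_reflect (h : ∀ v ∈ e, f v ≤ m ∧ g v = m - f v) :
    arcLen g e = arcLen f e := by
  induction e using Sym2.ind with | _ u v =>
  have hu := h u (Sym2.mem_mk_left u v)
  have hv := h v (Sym2.mem_mk_right u v)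
  simp only [arcLen, arc_mk]
  omega

end Reflect

theorem exists_adj_lt_of_mem_edgeSet {G : SimpleGraph V} {f : V → ℕ} (hf : Function.Injective f)
    {e : Sym2 V} (he : e ∈ G.edgeSet) : ∃ u v, G.Adj u v ∧ f u < f v ∧ e = s(u, v) := by
  induction e using Sym2.ind with | _ u v =>
  rcases lt_or_gt_of_ne (hf.ne (G.ne_of_adj he)) with h | h
  · exact ⟨u, v, he, h, rfl⟩
  · exact ⟨v, u, he.symm, h, Sym2.eq_swap⟩

variable [Fintype V] {G : SimpleGraph V} {π : V ≃ Fin (Fintype.card V)}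

theorem edgeLen_eq_arcLen (π : V ≃ Fin (Fintype.card V)) (e : Sym2 V) :
    edgeLen π e = arcLen (π · : V → ℕ) e := by
  induction e using Sym2.ind with | _ u v =>
  simp only [edgeLen, Sym2.lift_mk, arcLen, arc_mk]
  omega

theorem cost_eq_sum_arcLen (G : SimpleGraph V) (π : V ≃ Fin (Fintype.card V)) :
    cost G π = ∑ e ∈ G.edgeFinset, arcLen (π · : V → ℕ) e := by
  rw [cost, ← G.coe_edgeFinset, finsum_mem_coe_finset]
  exact sum_congr rfl fun e _ => edgeLen_eq_arcLen π e

theorem injective_val_comp (π : V ≃ Fin (Fintype.card V)) :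
    Function.Injective (π · : V → ℕ) :=
  Fin.val_injective.comp π.injective

theorem planar_iff_nonCrossing :
    Planar G π ↔ NonCrossing (arc (π · : V → ℕ) '' G.edgeSet) := by
  constructor
  · rintro hπ _ ⟨e₁, he₁, rfl⟩ _ ⟨e₂, he₂, rfl⟩
    obtain ⟨s, t, hst, h₁, rfl⟩ := exists_adj_lt_of_mem_edgeSet (injective_val_comp π) he₁
    obtain ⟨u, v, huv, h₂, rfl⟩ := exists_adj_lt_of_mem_edgeSet (injective_val_comp π) he₂
    rw [arc_mk_of_le (f := (π · : V → ℕ)) h₁.le,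
      arc_mk_of_le (f := (π · : V → ℕ)) h₂.le]
    exact fun ⟨h₃, h₄, h₅⟩ => hπ hst huv h₁ h₂ h₃ ⟨h₄, h₅⟩
  · intro hA s t u v hst huv h₁ h₂ h₃ h₄
    have := hA _ ⟨_, G.mem_edgeSet.2 hst, rfl⟩ _ ⟨_, G.mem_edgeSet.2 huv, rfl⟩
    rw [arc_mk_of_le (f := (π · : V → ℕ)) h₁.le,
      arc_mk_of_le (f := (π · : V → ℕ)) h₂.le] at this
    exact this ⟨h₃, h₄⟩

theorem Planar.cost_le_choose (hπ : Planar G π) (hG : G.IsTree) :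
    cost G π ≤ (Fintype.card V).choose 2 := by
  simp only [cost_eq_sum_arcLen, arcLen]
  set f : V → ℕ := (π · : V → ℕ)
  have hinj : Function.Injective (arc f) := arc_injective (injective_val_comp π)
  have hA : NonCrossing (G.edgeFinset.image (arc f) : Set (ℕ × ℕ)) := by
    simpa only [coe_image, coe_edgeFinset] using planar_iff_nonCrossing.1 hπ
  have hcard : #(G.edgeFinset.image (arc f)) + 1 = Fintype.card V := by
    rw [card_image_of_injective _ hinj]
    exact hG.card_edgeFinset
  rw [← sum_image (f := fun p : ℕ × ℕ => p.2 - p.1) fun e₁ _ e₂ _ h => hinj h]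
  refine hA.sum_length_le hcard.le ?_
  simp only [mem_image, mem_edgeFinset]
  rintro _ ⟨e, he, rfl⟩
  obtain ⟨u, v, -, huv, rfl⟩ := exists_adj_lt_of_mem_edgeSet (injective_val_comp π) he
  rw [arc_mk_of_le (f := (π · : V → ℕ)) huv.le]
  exact ⟨huv, (π v).isLt⟩

theorem SimpleGraph.IsTree.maxPlanar_le_choose (hG : G.IsTree) :
    maxPlanar G ≤ (Fintype.card V).choose 2 :=
  csSup_le' fun _ ⟨_, hπ, hc⟩ => hc ▸ hπ.cost_le_choose hG

theorem SimpleGraph.IsTree.maxPlanar_eq_choose (hG : G.IsTree) (hπ : Planar G π)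
    (hc : cost G π = (Fintype.card V).choose 2) :
    maxPlanar G = (Fintype.card V).choose 2 :=
  IsGreatest.csSup_eq
    ⟨⟨π, hπ, hc⟩, fun _ ⟨_, hπ', hc'⟩ => hc' ▸ hπ'.cost_le_choose hG⟩

theorem List.idxOf_reverse {α : Type*} [DecidableEq α] {l : List α} (hl : l.Nodup) {a : α}
    (ha : a ∈ l) : l.reverse.idxOf a = l.length - 1 - l.idxOf a := by
  have hlt : l.idxOf a < l.length := List.idxOf_lt_length_iff.2 ha
  have hi : l.length - 1 - l.idxOf a < l.reverse.length := by
    rw [List.length_reverse]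
    omega
  have hget : l.reverse[l.length - 1 - l.idxOf a] = a := by
    rw [List.getElem_reverse]
    simp only [show l.length - 1 - (l.length - 1 - l.idxOf a) = l.idxOf a by omega]
    exact List.getElem_idxOf hlt
  conv_lhs => rw [← hget]
  exact (List.nodup_reverse.2 hl).idxOf_getElem _ hi

theorem List.map_add_idxOf {α : Type*} [DecidableEq α] {l : List α} (hl : l.Nodup) (c : ℕ) :
    l.map (fun a => c + l.idxOf a) = List.range' c l.length := by
  refine List.ext_getElem (by simp) fun i h₁ _ => ?_
  simp only [List.getElem_map, List.getElem_range']
  rw [hl.idxOf_getElem i (by simpa using h₁), one_mul]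

theorem List.range'_one_add {m : ℕ} (hm : 1 ≤ m) (k : ℕ) :
    List.range' 1 (m + k) = List.range' 1 (m - 1) ++ m :: List.range' (m + 1) k := by
  have := List.range'_append (s := 1) (m := m - 1) (n := k + 1) (step := 1)
  rw [show 1 + 1 * (m - 1) = m by omega, show m - 1 + (k + 1) = m + k by omega,
    List.range'_succ] at this
  exact this.symm

theorem List.sum_range'_one (k : ℕ) : (List.range' 1 k).sum = (k + 1).choose 2 := by
  induction k with
  | zero => simp
  | succ k ih =>
    rw [List.range'_concat, List.sum_append, ih, Nat.choose_succ_succ' (k + 1)]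
    simp [add_comm]

namespace Caterpillar

variable {V : Type*}

-- A caterpillar is encoded by its backbone, in order, each backbone vertex paired with the list
-- of its leaves.
def verts : List (V × List V) → List V
  | [] => []
  | (b, L) :: tl => b :: (L ++ verts tl)

def edges : List (V × List V) → List (Sym2 V)
  | [] => []
  | [(b, L)] => L.map fun x => s(b, x)
  | (b, L) :: (b', L') :: tl => s(b, b') :: (L.map (fun x => s(b, x)) ++ edges ((b', L') :: tl))

def rosa : List (V × List V) → List V
  | [] => []
  | (b, L) :: tl => b :: ((rosa tl).reverse ++ L)

theorem rosa_perm (cs : List (V × List V)) : (rosa cs).Perm (verts cs) := by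
  induction cs with
  | nil => exact List.Perm.refl _
  | cons hd tl ih =>
    obtain ⟨b, L⟩ := hd
    exact ((((rosa tl).reverse_perm).trans ih).append_right L |>.trans List.perm_append_comm).cons b

theorem mem_verts_of_mem_edges {cs : List (V × List V)} {e : Sym2 V} (he : e ∈ edges cs) {v : V}
    (hv : v ∈ e) : v ∈ verts cs := by
  induction cs with
  | nil => simp [edges] at he
  | cons hd tl ih =>
    obtain ⟨b, L⟩ := hd
    match tl, he, ih with
    | [], he, _ =>
      simp only [edges, List.mem_map] at he
      obtain ⟨x, hx, rfl⟩ := he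
      rcases Sym2.mem_iff.1 hv with rfl | rfl <;> simp [verts, hx]
    | (b', L') :: tl', he, ih =>
      simp only [edges, List.mem_cons, List.mem_append, List.mem_map] at he
      rcases he with rfl | ⟨x, hx, rfl⟩ | he
      · rcases Sym2.mem_iff.1 hv with rfl | rfl <;> simp [verts]
      · rcases Sym2.mem_iff.1 hv with rfl | rfl <;> simp [verts, hx]
      · have := ih he
        simp only [verts, List.mem_cons, List.mem_append] at this ⊢
        tauto

theorem verts_map (l : List V) (g : V → List V) :
    verts (l.map fun s => (s, g s)) = l.flatMap fun s => s :: g s := by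
  induction l with
  | nil => rfl
  | cons s l ih => simp [verts, ih]

theorem edges_map_subset_edgeSet {G : SimpleGraph V} {g : V → List V} {l : List V}
    (hl : l.IsChain G.Adj) (hg : ∀ s ∈ l, ∀ x ∈ g s, G.Adj s x) :
    ∀ e ∈ edges (l.map fun s => (s, g s)), e ∈ G.edgeSet := by
  induction l with
  | nil => simp [edges]
  | cons s l ih =>
    match l, hl, hg, ih with
    | [], _, hg, _ =>
      simp only [List.map_cons, List.map_nil, edges, List.mem_map]
      rintro _ ⟨x, hx, rfl⟩
      exact hg s List.mem_cons_self x hx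
    | s' :: l', hl, hg, ih =>
      simp only [List.map_cons, edges, List.mem_cons, List.mem_append, List.mem_map]
      rintro e (rfl | ⟨x, hx, rfl⟩ | he)
      · exact hl.rel
      · exact hg s List.mem_cons_self x hx
      · exact ih hl.tail (fun a ha => hg a (List.mem_cons_of_mem s ha)) e
          (by simpa [edges] using he)

theorem nodup_of_nodup_verts_cons {b : V} {L : List V} {tl : List (V × List V)}
    (hnd : (verts ((b, L) :: tl)).Nodup) : L.Nodup ∧ (verts tl).Nodup :=
  List.nodup_append.1 (List.nodup_cons.1 hnd).2 |>.imp_right And.left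

variable [DecidableEq V]

section Cons

variable {b : V} {L : List V} {tl : List (V × List V)}

theorem idxOf_rosa_cons_self : (rosa ((b, L) :: tl)).idxOf b = 0 := by
  simp [rosa]

theorem idxOf_rosa_cons_of_mem_verts (hnd : (verts ((b, L) :: tl)).Nodup) {v : V}
    (hv : v ∈ verts tl) :
    (rosa ((b, L) :: tl)).idxOf v = (rosa tl).length - (rosa tl).idxOf v := by
  simp only [verts, List.nodup_cons, List.mem_append, not_or] at hnd
  have hvr : v ∈ rosa tl := (rosa_perm tl).mem_iff.2 hv
  have hvb : b ≠ v := fun h => hnd.1.2 (h ▸ hv)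
  have hlt := List.idxOf_lt_length_iff.2 hvr
  rw [rosa, List.idxOf_cons_ne _ hvb, List.idxOf_append_of_mem (List.mem_reverse.2 hvr),
    List.idxOf_reverse ((rosa_perm tl).nodup_iff.2 (List.nodup_append.1 hnd.2).2.1) hvr]
  omega

theorem idxOf_rosa_cons_of_mem_leaves (hnd : (verts ((b, L) :: tl)).Nodup) {x : V}
    (hx : x ∈ L) : (rosa ((b, L) :: tl)).idxOf x = (rosa tl).length + 1 + L.idxOf x := by
  simp only [verts, List.nodup_cons, List.mem_append, not_or] at hnd
  have hxb : b ≠ x := fun h => hnd.1.1 (h ▸ hx)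
  have hxr : x ∉ (rosa tl).reverse := fun h =>
    (List.nodup_append.1 hnd.2).2.2 x hx x ((rosa_perm tl).mem_iff.1 (List.mem_reverse.1 h)) rfl
  rw [rosa, List.idxOf_cons_ne _ hxb, List.idxOf_append_of_notMem hxr, List.length_reverse]
  omega

theorem arc_rosa_cons_mk_self (y : V) :
    arc (rosa ((b, L) :: tl)).idxOf s(b, y) = (0, (rosa ((b, L) :: tl)).idxOf y) := by
  simp [idxOf_rosa_cons_self]

theorem idxOf_rosa_cons_of_mem_edges (hnd : (verts ((b, L) :: tl)).Nodup) {e : Sym2 V}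
    (he : e ∈ edges tl) : ∀ v ∈ e, (rosa tl).idxOf v ≤ (rosa tl).length ∧
      (rosa ((b, L) :: tl)).idxOf v = (rosa tl).length - (rosa tl).idxOf v := fun v hv => by
  have hv := mem_verts_of_mem_edges he hv
  exact ⟨(List.idxOf_lt_length_iff.2 ((rosa_perm tl).mem_iff.2 hv)).le,
    idxOf_rosa_cons_of_mem_verts hnd hv⟩

theorem edges_cons_cases (hnd : (verts ((b, L) :: tl)).Nodup) {e : Sym2 V}
    (he : e ∈ edges ((b, L) :: tl)) :
    e ∈ edges tl ∨
      ∃ y, e = s(b, y) ∧ (rosa tl).length ≤ (rosa ((b, L) :: tl)).idxOf y := by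
  match tl, he, hnd with
  | [], he, _ =>
    simp only [edges, List.mem_map] at he
    obtain ⟨x, -, rfl⟩ := he
    exact Or.inr ⟨x, rfl, by simp [rosa]⟩
  | (b', L') :: tl', he, hnd =>
    simp only [edges, List.mem_cons, List.mem_append, List.mem_map] at he
    rcases he with rfl | ⟨x, hx, rfl⟩ | he
    · refine Or.inr ⟨b', rfl, ?_⟩
      rw [idxOf_rosa_cons_of_mem_verts hnd (by simp [verts])]
      simp [rosa]
    · exact Or.inr ⟨x, rfl, by rw [idxOf_rosa_cons_of_mem_leaves hnd hx]; omega⟩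
    · exact Or.inl he

theorem map_arcLen_rosa_cons_leaves (hnd : (verts ((b, L) :: tl)).Nodup) :
    L.map (fun x => arcLen (rosa ((b, L) :: tl)).idxOf s(b, x)) =
      List.range' ((rosa tl).length + 1) L.length := by
  refine (List.map_congr_left fun x hx => ?_).trans
    (List.map_add_idxOf (nodup_of_nodup_verts_cons hnd).1 _)
  rw [arcLen, arc_rosa_cons_mk_self, idxOf_rosa_cons_of_mem_leaves hnd hx, Nat.sub_zero]

end Cons

theorem map_arcLen_rosa_cons_cons {b b' : V} {L L' : List V} {tl : List (V × List V)}
    (hnd : (verts ((b, L) :: (b', L') :: tl)).Nodup) :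
    (edges ((b, L) :: (b', L') :: tl)).map (arcLen (rosa ((b, L) :: (b', L') :: tl)).idxOf) =
      (rosa ((b', L') :: tl)).length ::
        (List.range' ((rosa ((b', L') :: tl)).length + 1) L.length ++
          (edges ((b', L') :: tl)).map (arcLen (rosa ((b', L') :: tl)).idxOf)) := by
  have hback : arcLen (rosa ((b, L) :: (b', L') :: tl)).idxOf s(b, b') =
      (rosa ((b', L') :: tl)).length := by
    rw [arcLen, arc_rosa_cons_mk_self, idxOf_rosa_cons_of_mem_verts hnd (by simp [verts])]
    simp [rosa]
  simp only [edges, List.map_cons, List.map_append, List.map_map, hback, List.cons.injEq,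
    true_and]
  exact congrArg₂ (· ++ ·) (map_arcLen_rosa_cons_leaves hnd)
    (List.map_congr_left fun e he => arcLen_reflect (idxOf_rosa_cons_of_mem_edges hnd he))

theorem arcLen_rosa_perm (cs : List (V × List V)) (hnd : (verts cs).Nodup) :
    ((edges cs).map (arcLen (rosa cs).idxOf)).Perm (List.range' 1 ((verts cs).length - 1)) := by
  induction cs with
  | nil => simp [edges, verts]
  | cons hd tl ih =>
    obtain ⟨b, L⟩ := hd
    match tl, ih, hnd with
    | [], _, hnd =>
      simp only [edges, List.map_map, verts, List.append_nil, List.length_cons,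
        Nat.add_sub_cancel]
      exact .of_eq (map_arcLen_rosa_cons_leaves hnd)
    | (b', L') :: tl, ih, hnd =>
      have hm : (rosa ((b', L') :: tl)).length = (verts ((b', L') :: tl)).length :=
        (rosa_perm _).length_eq
      have hm₁ : 1 ≤ (rosa ((b', L') :: tl)).length := by simp [rosa]
      have ih := ih (nodup_of_nodup_verts_cons hnd).2
      rw [← hm] at ih
      rw [map_arcLen_rosa_cons_cons hnd, verts, List.length_cons, List.length_append, ← hm,
        show L.length + (rosa ((b', L') :: tl)).length + 1 - 1 =
          (rosa ((b', L') :: tl)).length + L.length by omega, List.range'_one_add hm₁]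
      exact ((List.perm_append_comm.cons _).trans List.perm_middle.symm).trans
        (ih.append_right _)

theorem nonCrossing_rosa (cs : List (V × List V)) (hnd : (verts cs).Nodup) :
    NonCrossing (arc (rosa cs).idxOf '' {e | e ∈ edges cs}) := by
  induction cs with
  | nil => simp [edges, NonCrossing]
  | cons hd tl ih =>
    obtain ⟨b, L⟩ := hd
    refine (ih (nodup_of_nodup_verts_cons hnd).2).union_reflect (rosa tl).length |>.mono ?_
    rintro _ ⟨e, he, rfl⟩
    rcases edges_cons_cases hnd he with he | ⟨y, rfl, hy⟩
    · exact Or.inr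
        ⟨_, ⟨e, he, rfl⟩, (arc_reflect (idxOf_rosa_cons_of_mem_edges hnd he)).symm⟩
    · left
      rw [arc_rosa_cons_mk_self]
      exact ⟨rfl, hy⟩

end Caterpillar

section Arrangement

variable {V : Type*} [Fintype V] [DecidableEq V]

theorem List.Nodup.length_eq_card {l : List V} (hl : l.Nodup) (hmem : ∀ v, v ∈ l) :
    l.length = Fintype.card V :=
  (Fintype.card_fin _).symm.trans
    (Fintype.card_congr (List.Nodup.getEquivOfForallMemList l hl hmem))

def arrangementOfList (l : List V) (hl : l.Nodup) (hmem : ∀ v, v ∈ l) :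
    V ≃ Fin (Fintype.card V) :=
  (List.Nodup.getEquivOfForallMemList l hl hmem).symm.trans (finCongr (hl.length_eq_card hmem))

theorem arrangementOfList_val (l : List V) (hl : l.Nodup) (hmem : ∀ v, v ∈ l) :
    (arrangementOfList l hl hmem · : V → ℕ) = l.idxOf :=
  rfl

open Caterpillar in
theorem SimpleGraph.IsTree.exists_planar_cost_eq_choose {G : SimpleGraph V} (hG : G.IsTree)
    {cs : List (V × List V)} (hnd : (verts cs).Nodup) (hmem : ∀ v, v ∈ verts cs)
    (hadj : ∀ e ∈ edges cs, e ∈ G.edgeSet) :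
    ∃ π : V ≃ Fin (Fintype.card V), Planar G π ∧ cost G π = (Fintype.card V).choose 2 := by
  have hl : (rosa cs).Nodup := (rosa_perm cs).nodup_iff.2 hnd
  have hlmem : ∀ v, v ∈ rosa cs := fun v => (rosa_perm cs).mem_iff.2 (hmem v)
  have hlen := arcLen_rosa_perm cs hnd
  rw [hnd.length_eq_card hmem] at hlen
  have hend : (edges cs).Nodup := (hlen.nodup_iff.2 List.nodup_range').of_map _
  have hV := hG.card_edgeFinset
  have hE : (edges cs).toFinset = G.edgeFinset := by
    refine eq_of_subset_of_card_le
      (fun e he => mem_edgeFinset.2 (hadj e (List.mem_toFinset.1 he))) ?_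
    rw [List.toFinset_card_of_nodup hend, ← List.length_map (arcLen (rosa cs).idxOf),
      hlen.length_eq, List.length_range']
    omega
  refine ⟨arrangementOfList _ hl hlmem, planar_iff_nonCrossing.2 ?_, ?_⟩
  · rw [arrangementOfList_val, ← coe_edgeFinset, ← hE, List.coe_toFinset]
    exact nonCrossing_rosa cs hnd
  · rw [cost_eq_sum_arcLen, arrangementOfList_val, ← hE, List.sum_toFinset _ hend, hlen.sum_eq,
      List.sum_range'_one]
    congr 1
    omega

end Arrangement

theorem SimpleGraph.Walk.IsPath.exists_caterpillar {V : Type*} [Fintype V] {G : SimpleGraph V}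
    {a b : V} {p : G.Walk a b} (hp : p.IsPath)
    (hdom : ∀ v, v ∈ p.support ∨ ∃ u ∈ p.support, G.Adj u v) :
    ∃ cs : List (V × List V),
      (Caterpillar.verts cs).Nodup ∧ (∀ v, v ∈ Caterpillar.verts cs) ∧
        ∀ e ∈ Caterpillar.edges cs, e ∈ G.edgeSet := by
  have : ∀ v, ∃ u, u ∈ p.support ∧ (v ∉ p.support → G.Adj u v) := fun v =>
    (hdom v).elim (fun hv => ⟨v, hv, fun h => (h hv).elim⟩)
      fun ⟨u, hu, huv⟩ => ⟨u, hu, fun _ => huv⟩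
  choose f hf_mem hf_adj using this
  set leaves : V → List V := fun s => (univ.filter fun v => v ∉ p.support ∧ f v = s).toList
  have hleaves : ∀ s x, x ∈ leaves s ↔ x ∉ p.support ∧ f x = s := by simp [leaves]
  set anchor : V → V := fun v => if v ∈ p.support then v else f v
  have hanchor : ∀ v, anchor v ∈ p.support := fun v => by
    by_cases hv : v ∈ p.support <;> simp [anchor, hv, hf_mem]
  have hgroup : ∀ s ∈ p.support, ∀ x, x ∈ s :: leaves s ↔ anchor x = s := fun s hs x => by
    by_cases hx : x ∈ p.support
    · simp only [List.mem_cons, hleaves, anchor, if_pos hx]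
      tauto
    · have : x ≠ s := fun h => hx (h ▸ hs)
      simp only [List.mem_cons, hleaves, anchor, if_neg hx]
      tauto
  refine ⟨p.support.map fun s => (s, leaves s), ?_, fun v => ?_, ?_⟩
  · rw [Caterpillar.verts_map, List.nodup_flatMap]
    refine ⟨fun s hs =>
      List.nodup_cons.2 ⟨fun h => ((hleaves s s).1 h).1 hs, nodup_toList _⟩, ?_⟩
    exact hp.support_nodup.imp_of_mem fun hs hs' hne x hx hx' =>
      hne (((hgroup _ hs x).1 hx).symm.trans ((hgroup _ hs' x).1 hx'))
  · rw [Caterpillar.verts_map, List.mem_flatMap]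
    exact ⟨anchor v, hanchor v, (hgroup _ (hanchor v) v).2 rfl⟩
  · refine Caterpillar.edges_map_subset_edgeSet p.isChain_adj_support fun s _ x hx => ?_
    obtain ⟨hx', rfl⟩ := (hleaves s x).1 hx
    exact hf_adj x hx'

theorem caterpillar_maxPlanar_general (n : ℕ)
    (G : SimpleGraph (Fin n)) (hG : G.IsTree)
    (hcat : ∃ (a b : Fin n) (p : G.Walk a b), p.IsPath ∧
      ∀ v : Fin n, v ∈ p.support ∨ ∃ u ∈ p.support, G.Adj u v) :
    (∃ π : Fin n ≃ Fin (Fintype.card (Fin n)),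
        Planar G π ∧ cost G π = n.choose 2) ∧
    maxPlanar G = n.choose 2 ∧
    ∀ G' : SimpleGraph (Fin n), G'.IsTree → maxPlanar G' ≤ maxPlanar G := by
  obtain ⟨a, b, p, hp, hdom⟩ := hcat
  obtain ⟨cs, hnd, hmem, hadj⟩ := hp.exists_caterpillar hdom
  obtain ⟨π, hπ, hcost⟩ := hG.exists_planar_cost_eq_choose hnd hmem hadj
  have hmax := hG.maxPlanar_eq_choose hπ hcost
  rw [Fintype.card_fin] at hcost hmax
  refine ⟨⟨π, hπ, hcost⟩, hmax, fun G' hG' => ?_⟩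
  simpa [hmax] using hG'.maxPlanar_le_choose

/-- Every caterpillar tree (a tree having a path such that every vertex is on
the path or adjacent to it) on `n` vertices admits a planar arrangement of cost
`n choose 2`; hence `D_max^pl(T) = n choose 2` and caterpillars attain the
maximum of `D_max^pl` over all `n`-vertex trees. -/
theorem caterpillar_maxPlanar (n : ℕ) (hn : 0 < n)
    (G : SimpleGraph (Fin n)) (hG : G.IsTree)
    (hcat : ∃ (a b : Fin n) (p : G.Walk a b), p.IsPath ∧
      ∀ v : Fin n, v ∈ p.support ∨ ∃ u ∈ p.support, G.Adj u v) :
    (∃ π : Fin n ≃ Fin (Fintype.card (Fin n)),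
        Planar G π ∧ cost G π = n.choose 2) ∧
    maxPlanar G = n.choose 2 ∧
    ∀ G' : SimpleGraph (Fin n), G'.IsTree → maxPlanar G' ≤ maxPlanar G :=
  caterpillar_maxPlanar_general n G hG hcat
end
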